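/- arXiv:math-ph/0211015 — 4 statements merged into one kernel-verified Lean document; each statement's English description precedes it below -/
import Mathlib

section
/- Fix an integer ν ≥ 1, a bounded potential V : ℤ^ν → ℝ, and let H = H₀ + V. Then for every f, g ∈ ℓ²(ℤ^ν), Δ(f + g, U(f − g); V) ≥ 2⟨f, (H₀ − 2ν)f⟩ − 8ν‖g‖² + 4 Re⟨f, V g⟩. -/
noncomputable section

open scoped ComplexConjugate

namespace DHKS

/-- The Hilbert space ℓ²(α; ℂ). -/
abbrev L2 (α : Type*) := lp (fun _ : α => ℂ) 2

variable {α β : Type*}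

lemma memℓp_two_iff (f : α → ℂ) :
    Memℓp f 2 ↔ Summable (fun n => ‖f n‖ ^ (2 : ℝ)) := by
  rw [memℓp_gen_iff (by norm_num)]
  norm_num

lemma sum_sq_le (u : L2 α) (s : Finset α) :
    ∑ n ∈ s, ‖(u : α → ℂ) n‖ ^ (2:ℝ) ≤ ‖u‖ ^ (2:ℝ) := by
  simpa using lp.sum_rpow_le_norm_rpow (p := 2) (by norm_num) u s

lemma norm_le_of_sum_sq (u : L2 α) {C : ℝ} (hC : 0 ≤ C)
    (h : ∀ s : Finset α, ∑ n ∈ s, ‖(u : α → ℂ) n‖ ^ (2:ℝ) ≤ C ^ (2:ℝ)) : ‖u‖ ≤ C := by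
  refine lp.norm_le_of_forall_sum_le (p := 2) (by norm_num) hC ?_
  simpa using h

/-- Composition with an injective map, as a continuous linear map on ℓ². -/
def compOp (σ : α → β) (hσ : Function.Injective σ) : L2 β →L[ℂ] L2 α :=
  LinearMap.mkContinuous
    { toFun := fun u => ⟨fun n => (u : β → ℂ) (σ n), by
        apply (memℓp_two_iff _).2
        exact ((memℓp_two_iff _).1 (lp.memℓp u)).comp_injective hσ⟩
      map_add' := by
        intro u v; apply lp.ext; funext n
        simp only [lp.coeFn_add, Pi.add_apply]
      map_smul' := by
        intro c u; apply lp.ext; funext n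
        simp only [lp.coeFn_smul, Pi.smul_apply, RingHom.id_apply] }
    1 (by
      intro u
      rw [one_mul]
      refine norm_le_of_sum_sq _ (norm_nonneg u) (fun s => ?_)
      classical
      calc ∑ n ∈ s, ‖(u : β → ℂ) (σ n)‖ ^ (2:ℝ)
          = ∑ m ∈ s.image σ, ‖(u : β → ℂ) m‖ ^ (2:ℝ) := by
            rw [Finset.sum_image (fun a _ b _ h => hσ h)]
        _ ≤ ‖u‖ ^ (2:ℝ) := sum_sq_le u _)

@[simp] lemma compOp_apply (σ : α → β) (hσ : Function.Injective σ) (u : L2 β) (n : α) :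
    (compOp σ hσ u : α → ℂ) n = (u : β → ℂ) (σ n) := rfl

/-- Multiplication by a bounded real-valued function, as a continuous linear map on ℓ². -/
def mulOp (V : α → ℝ) (C : ℝ) (hC : ∀ n, |V n| ≤ C) : L2 α →L[ℂ] L2 α :=
  LinearMap.mkContinuous
    { toFun := fun u => ⟨fun n => (V n : ℂ) * (u : α → ℂ) n, by
        apply (memℓp_two_iff _).2
        have h := (((memℓp_two_iff _).1 (lp.memℓp u)).mul_left ((max C 0) ^ (2:ℝ)))
        apply Summable.of_nonneg_of_le (fun n => by positivity) (fun n => ?_) h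
        have h1 : ‖(V n : ℂ) * (u : α → ℂ) n‖ = |V n| * ‖(u : α → ℂ) n‖ := by
          rw [norm_mul, Complex.norm_real, Real.norm_eq_abs]
        rw [h1, Real.mul_rpow (abs_nonneg _) (norm_nonneg _)]
        have h3 : |V n| ^ (2:ℝ) ≤ (max C 0) ^ (2:ℝ) :=
          Real.rpow_le_rpow (abs_nonneg _) (le_max_of_le_left (hC n)) (by norm_num)
        exact mul_le_mul_of_nonneg_right h3 (by positivity)⟩
      map_add' := by
        intro u v; apply lp.ext; funext n
        simp only [lp.coeFn_add, Pi.add_apply]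
        ring
      map_smul' := by
        intro c u; apply lp.ext; funext n
        simp only [lp.coeFn_smul, Pi.smul_apply, RingHom.id_apply, smul_eq_mul]
        ring }
    (max C 0) (by
      intro u
      refine norm_le_of_sum_sq _ (by positivity) (fun s => ?_)
      have key : ∀ n ∈ s, ‖(V n : ℂ) * (u : α → ℂ) n‖ ^ (2:ℝ)
          ≤ (max C 0) ^ (2:ℝ) * ‖(u : α → ℂ) n‖ ^ (2:ℝ) := by
        intro n _
        have h1 : ‖(V n : ℂ) * (u : α → ℂ) n‖ = |V n| * ‖(u : α → ℂ) n‖ := by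
          rw [norm_mul, Complex.norm_real, Real.norm_eq_abs]
        rw [h1, Real.mul_rpow (abs_nonneg _) (norm_nonneg _)]
        have h3 : |V n| ^ (2:ℝ) ≤ (max C 0) ^ (2:ℝ) :=
          Real.rpow_le_rpow (abs_nonneg _) (le_max_of_le_left (hC n)) (by norm_num)
        exact mul_le_mul_of_nonneg_right h3 (by positivity)
      calc ∑ n ∈ s, ‖(V n : ℂ) * (u : α → ℂ) n‖ ^ (2:ℝ)
          ≤ ∑ n ∈ s, (max C 0) ^ (2:ℝ) * ‖(u : α → ℂ) n‖ ^ (2:ℝ) := Finset.sum_le_sum key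
        _ = (max C 0) ^ (2:ℝ) * ∑ n ∈ s, ‖(u : α → ℂ) n‖ ^ (2:ℝ) := by rw [Finset.mul_sum]
        _ ≤ (max C 0) ^ (2:ℝ) * ‖u‖ ^ (2:ℝ) :=
            mul_le_mul_of_nonneg_left (sum_sq_le u _) (by positivity)
        _ = (max C 0 * ‖u‖) ^ (2:ℝ) :=
            (Real.mul_rpow (le_max_right _ _) (norm_nonneg _)).symm)

@[simp] lemma mulOp_apply (V : α → ℝ) (C : ℝ) (hC : ∀ n, |V n| ≤ C) (u : L2 α) (n : α) :
    (mulOp V C hC u : α → ℂ) n = (V n : ℂ) * (u : α → ℂ) n := rfl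

/-- Extension by zero along an injective map, as a continuous linear map on ℓ². -/
def extOp (σ : α → β) (hσ : Function.Injective σ) : L2 α →L[ℂ] L2 β :=
  LinearMap.mkContinuous
    { toFun := fun u => ⟨Function.extend σ (u : α → ℂ) 0, by
        apply (memℓp_two_iff _).2
        have hpt : (fun b => ‖Function.extend σ (u : α → ℂ) 0 b‖ ^ (2:ℝ))
            = Function.extend σ (fun a => ‖(u : α → ℂ) a‖ ^ (2:ℝ)) 0 := by
          funext b
          rcases em (∃ a, σ a = b) with ⟨a, rfl⟩ | hb
          · rw [hσ.extend_apply, hσ.extend_apply]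
          · rw [Function.extend_apply' _ _ _ hb, Function.extend_apply' _ _ _ hb]
            simp [Real.zero_rpow (by norm_num : (2:ℝ) ≠ 0)]
        rw [hpt, summable_extend_zero hσ]
        exact (memℓp_two_iff _).1 (lp.memℓp u)⟩
      map_add' := by
        intro u v; apply lp.ext; funext b
        simp only [lp.coeFn_add, Pi.add_apply]
        rcases em (∃ a, σ a = b) with ⟨a, rfl⟩ | hb
        · rw [hσ.extend_apply, hσ.extend_apply, hσ.extend_apply]
          simp [lp.coeFn_add]
        · rw [Function.extend_apply' _ _ _ hb, Function.extend_apply' _ _ _ hb,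
            Function.extend_apply' _ _ _ hb]
          simp
      map_smul' := by
        intro c u; apply lp.ext; funext b
        simp only [lp.coeFn_smul, Pi.smul_apply, RingHom.id_apply, smul_eq_mul]
        rcases em (∃ a, σ a = b) with ⟨a, rfl⟩ | hb
        · rw [hσ.extend_apply, hσ.extend_apply]
          simp [lp.coeFn_smul]
        · rw [Function.extend_apply' _ _ _ hb, Function.extend_apply' _ _ _ hb]
          simp }
    1 (by
      intro u
      rw [one_mul]
      refine norm_le_of_sum_sq _ (norm_nonneg u) (fun s => ?_)
      have hpt : (fun b => ‖Function.extend σ (u : α → ℂ) 0 b‖ ^ (2:ℝ))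
          = Function.extend σ (fun a => ‖(u : α → ℂ) a‖ ^ (2:ℝ)) 0 := by
        funext b
        rcases em (∃ a, σ a = b) with ⟨a, rfl⟩ | hb
        · rw [hσ.extend_apply, hσ.extend_apply]
        · rw [Function.extend_apply' _ _ _ hb, Function.extend_apply' _ _ _ hb]
          simp [Real.zero_rpow (by norm_num : (2:ℝ) ≠ 0)]
      have hsumm : Summable (fun a => ‖(u : α → ℂ) a‖ ^ (2:ℝ)) :=
        (memℓp_two_iff _).1 (lp.memℓp u)
      calc ∑ b ∈ s, ‖Function.extend σ (u : α → ℂ) 0 b‖ ^ (2:ℝ)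
          ≤ ∑' b, ‖Function.extend σ (u : α → ℂ) 0 b‖ ^ (2:ℝ) := by
            refine Summable.sum_le_tsum s (fun b _ => by positivity) ?_
            rw [hpt, summable_extend_zero hσ]; exact hsumm
        _ = ∑' a, ‖(u : α → ℂ) a‖ ^ (2:ℝ) := by
            rw [hpt, tsum_extend_zero hσ]
        _ = ‖u‖ ^ (2:ℝ) := by
            simpa using (lp.norm_rpow_eq_tsum (p := 2) (by norm_num) u).symm)

lemma extOp_apply (σ : α → β) (hσ : Function.Injective σ) (u : L2 α) (b : β) :
    (extOp σ hσ u : β → ℂ) b = Function.extend σ (u : α → ℂ) 0 b := rfl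

/-- The real quadratic form ⟨φ, A φ⟩ of an operator. -/
def quadForm (A : L2 α →L[ℂ] L2 α) (φ : L2 α) : ℝ :=
  (inner ℂ φ (A φ) : ℂ).re

/-- `E` is an eigenvalue of the bounded operator `A`. -/
def IsEigenvalue (A : L2 α →L[ℂ] L2 α) (E : ℝ) : Prop :=
  ∃ u : L2 α, u ≠ 0 ∧ A u = (E : ℂ) • u

lemma abs_mul_sq_le {γ x Cb : ℝ} (h : |x| ≤ Cb) : |γ * x ^ 2| ≤ |γ| * Cb ^ 2 := by
  have h1 := abs_le.1 h
  rw [abs_mul, abs_of_nonneg (sq_nonneg x)]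
  exact mul_le_mul_of_nonneg_left (sq_le_sq' (by linarith [h1.1]) h1.2) (abs_nonneg γ)

end DHKS

namespace DHKS

/-! ## The lattice ℤ^ν -/

/-- The lattice `ℤ^ν`. -/
abbrev Zlat (ν : ℕ) := Fin ν → ℤ

/-- The ℓ¹-norm `|n|₁ = |n₁| + ⋯ + |n_ν|` of a lattice point. -/
def normOne {ν : ℕ} (n : Zlat ν) : ℕ := ∑ i, (n i).natAbs

/-- The `i`-th standard unit vector in `ℤ^ν`. -/
def unitVec (ν : ℕ) (i : Fin ν) : Zlat ν := fun k => if k = i then 1 else 0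

/-- The free discrete Schrödinger operator `(H₀ u)(n) = ∑_{|j|₁ = 1} u(n+j)`
on `ℓ²(ℤ^ν)`, written as the sum over translations by `± eᵢ`. -/
def H0 (ν : ℕ) : L2 (Zlat ν) →L[ℂ] L2 (Zlat ν) :=
  ∑ i : Fin ν,
    (compOp (fun n => n + unitVec ν i) (add_left_injective _) +
      compOp (fun n => n + (-unitVec ν i)) (add_left_injective _))

lemma H0_apply {ν : ℕ} (u : L2 (Zlat ν)) (n : Zlat ν) :
    (H0 ν u : Zlat ν → ℂ) n =
      ∑ i : Fin ν, ((u : Zlat ν → ℂ) (n + unitVec ν i) + (u : Zlat ν → ℂ) (n - unitVec ν i)) := by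
  simp [H0, ContinuousLinearMap.sum_apply, lp.coeFn_sum, Finset.sum_apply,
    ContinuousLinearMap.add_apply, lp.coeFn_add, Pi.add_apply, sub_eq_add_neg]
  erw [Finset.sum_apply]
  simp

/-- The unitary `(U φ)(n) = (-1)^{|n|₁} φ(n)`. -/
def Uop (ν : ℕ) : L2 (Zlat ν) →L[ℂ] L2 (Zlat ν) :=
  mulOp (fun n => (-1 : ℝ) ^ normOne n) 1 (fun n => by simp [abs_pow])

/-- The discrete Schrödinger operator `H = H₀ + V` on `ℓ²(ℤ^ν)`. -/
def schrodinger (ν : ℕ) (V : Zlat ν → ℝ) (C : ℝ) (hC : ∀ n, |V n| ≤ C) :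
    L2 (Zlat ν) →L[ℂ] L2 (Zlat ν) :=
  H0 ν + mulOp V C hC

/-- The quantity `Δ(φ₊, φ₋; V) = ⟨φ₊, (H-2ν)φ₊⟩ + ⟨φ₋, (-H-2ν)φ₋⟩`. -/
def Delta (ν : ℕ) (V : Zlat ν → ℝ) (C : ℝ) (hC : ∀ n, |V n| ≤ C)
    (φp φm : L2 (Zlat ν)) : ℝ :=
  quadForm (schrodinger ν V C hC - ((2 * (ν:ℝ) : ℝ) : ℂ) • 1) φp +
    quadForm (-schrodinger ν V C hC - ((2 * (ν:ℝ) : ℝ) : ℂ) • 1) φm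

end DHKS

/-!
`U` anticommutes with `H₀` and commutes with `V`, so conjugating by `U` turns the second
term of `Δ(f+g, U(f−g); V)` into `⟨f−g, (H₀ − V − 2ν)(f−g)⟩`. Adding the first term, the
parallelogram law for `H₀ − 2ν` and the symmetry of `V` give
`Δ = 2⟨f,(H₀−2ν)f⟩ + 2⟨g,(H₀−2ν)g⟩ + 4 Re⟨f,Vg⟩`, and `‖H₀‖ ≤ 2ν` bounds the middle term
below by `−4ν‖g‖²`.
-/

namespace DHKS

section Operators

variable {α β : Type*}

lemma norm_compOp_le (σ : α → β) (hσ : Function.Injective σ) : ‖compOp σ hσ‖ ≤ 1 :=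
  LinearMap.mkContinuous_norm_le _ zero_le_one _

lemma mulOp_comm (V W : α → ℝ) (C D : ℝ) (hC : ∀ n, |V n| ≤ C) (hD : ∀ n, |W n| ≤ D)
    (u : L2 α) : mulOp V C hC (mulOp W D hD u) = mulOp W D hD (mulOp V C hC u) := by
  ext n
  simp only [mulOp_apply]
  ring

lemma inner_mulOp_left (V : α → ℝ) (C : ℝ) (hC : ∀ n, |V n| ≤ C) (u v : L2 α) :
    inner ℂ (mulOp V C hC u) v = inner ℂ u (mulOp V C hC v) := by
  simp only [lp.inner_eq_tsum, mulOp_apply]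
  refine tsum_congr fun n => ?_
  simp only [RCLike.inner_apply, map_mul, Complex.conj_ofReal]
  ring

lemma quadForm_add (A B : L2 α →L[ℂ] L2 α) (φ : L2 α) :
    quadForm (A + B) φ = quadForm A φ + quadForm B φ := by
  simp only [quadForm, add_apply, inner_add_right, Complex.add_re]

lemma quadForm_sub (A B : L2 α →L[ℂ] L2 α) (φ : L2 α) :
    quadForm (A - B) φ = quadForm A φ - quadForm B φ := by
  simp only [quadForm, sub_apply, inner_sub_right, Complex.sub_re]

lemma quadForm_add_add_quadForm_sub (A : L2 α →L[ℂ] L2 α) (f g : L2 α) :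
    quadForm A (f + g) + quadForm A (f - g) = 2 * quadForm A f + 2 * quadForm A g := by
  simp only [quadForm, map_add, map_sub, inner_add_left, inner_add_right, inner_sub_left,
    inner_sub_right, Complex.add_re, Complex.sub_re]
  ring

lemma quadForm_add_sub_quadForm_sub (A : L2 α →L[ℂ] L2 α)
    (hA : ∀ u v, inner ℂ (A u) v = inner ℂ u (A v)) (f g : L2 α) :
    quadForm A (f + g) - quadForm A (f - g) = 4 * (inner ℂ f (A g)).re := by
  have hcross : (inner ℂ g (A f)).re = (inner ℂ f (A g)).re := by
    rw [← hA, ← inner_conj_symm, Complex.conj_re]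
  simp only [quadForm, map_add, map_sub, inner_add_left, inner_add_right, inner_sub_left,
    inner_sub_right, Complex.add_re, Complex.sub_re, hcross]
  ring

lemma neg_mul_norm_sq_le_quadForm_sub_smul_one (A : L2 α →L[ℂ] L2 α) {c : ℝ} (hA : ‖A‖ ≤ c)
    (φ : L2 α) : -(2 * c) * ‖φ‖ ^ 2 ≤ quadForm (A - (c : ℂ) • 1) φ := by
  have hre : -(c * ‖φ‖ ^ 2) ≤ quadForm A φ := by
    have : |quadForm A φ| ≤ c * ‖φ‖ ^ 2 :=
      calc |quadForm A φ| ≤ ‖inner ℂ φ (A φ)‖ := Complex.abs_re_le_norm _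
        _ ≤ ‖φ‖ * (‖A‖ * ‖φ‖) := (norm_inner_le_norm _ _).trans
            (mul_le_mul_of_nonneg_left (A.le_opNorm φ) (norm_nonneg _))
        _ ≤ ‖φ‖ * (c * ‖φ‖) := by gcongr
        _ = c * ‖φ‖ ^ 2 := by ring
    exact neg_le_of_abs_le this
  have hone : quadForm ((c : ℂ) • 1) φ = c * ‖φ‖ ^ 2 := by
    simp only [quadForm, smul_apply, one_apply_eq_self,
      inner_smul_right, inner_self_eq_norm_sq_to_K, Complex.re_ofReal_mul]
    norm_cast
  rw [quadForm_sub, hone]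
  linarith

end Operators

lemma neg_one_pow_normOne {ν : ℕ} (n : Zlat ν) :
    (-1 : ℂ) ^ normOne n = ∏ k, ((n k).negOnePow : ℂ) := by
  simp only [normOne, Int.coe_negOnePow, Finset.prod_pow_eq_pow_sum]

lemma neg_one_pow_normOne_add {ν : ℕ} (n m : Zlat ν) :
    (-1 : ℂ) ^ normOne (n + m) = (-1 : ℂ) ^ normOne n * (-1 : ℂ) ^ normOne m := by
  simp only [neg_one_pow_normOne, Pi.add_apply, Int.negOnePow_add, Units.val_mul,
    Int.cast_mul, Finset.prod_mul_distrib]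

lemma normOne_unitVec (ν : ℕ) (i : Fin ν) : normOne (unitVec ν i) = 1 := by
  simp [normOne, unitVec, apply_ite Int.natAbs]

lemma normOne_neg {ν : ℕ} (n : Zlat ν) : normOne (-n) = normOne n := by
  simp [normOne]

lemma Uop_apply {ν : ℕ} (u : L2 (Zlat ν)) (n : Zlat ν) :
    (Uop ν u : Zlat ν → ℂ) n = (-1 : ℂ) ^ normOne n * (u : Zlat ν → ℂ) n := by
  simp [Uop]

lemma Uop_Uop {ν : ℕ} (u : L2 (Zlat ν)) : Uop ν (Uop ν u) = u := by
  ext n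
  simp only [Uop_apply, ← mul_assoc, ← pow_add, ← two_mul, pow_mul, neg_one_sq, one_pow,
    one_mul]

lemma inner_Uop_Uop {ν : ℕ} (u v : L2 (Zlat ν)) :
    inner ℂ (Uop ν u) (Uop ν v) = inner ℂ u v := by
  rw [Uop, inner_mulOp_left, ← Uop, Uop_Uop]

-- A unit step changes the parity of `|n|₁`.
lemma H0_Uop {ν : ℕ} (u : L2 (Zlat ν)) : H0 ν (Uop ν u) = -Uop ν (H0 ν u) := by
  ext n
  have hstep : ∀ m, normOne m = 1 → (-1 : ℂ) ^ normOne (n + m) = -(-1) ^ normOne n := by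
    intro m hm
    rw [neg_one_pow_normOne_add, hm, pow_one, mul_neg_one]
  simp only [lp.coeFn_neg, Pi.neg_apply, H0_apply, Uop_apply, sub_eq_add_neg,
    hstep _ (normOne_unitVec ν _), hstep _ (normOne_neg _ ▸ normOne_unitVec ν _),
    Finset.mul_sum, ← Finset.sum_neg_distrib]
  ring_nf

lemma norm_H0_le (ν : ℕ) : ‖H0 ν‖ ≤ 2 * ν := by
  calc ‖H0 ν‖ ≤ ∑ _i : Fin ν, ((1 : ℝ) + 1) := by
        refine (norm_sum_le _ _).trans (Finset.sum_le_sum fun i _ => ?_)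
        exact (norm_add_le _ _).trans (add_le_add (norm_compOp_le _ _) (norm_compOp_le _ _))
    _ = 2 * ν := by simp only [Finset.sum_const, Finset.card_univ, Fintype.card_fin]; ring

lemma neg_schrodinger_sub_Uop (ν : ℕ) (V : Zlat ν → ℝ) (C : ℝ) (hC : ∀ n, |V n| ≤ C) (c : ℂ)
    (w : L2 (Zlat ν)) :
    (-schrodinger ν V C hC - c • 1) (Uop ν w) = Uop ν ((H0 ν - c • 1 - mulOp V C hC) w) := by
  have hV : mulOp V C hC (Uop ν w) = Uop ν (mulOp V C hC w) := by
    rw [Uop, mulOp_comm]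
  simp only [schrodinger, sub_apply, neg_apply, add_apply, smul_apply, one_apply_eq_self,
    map_sub, map_smul, H0_Uop, hV]
  module

lemma Delta_add_Uop_sub (ν : ℕ) (V : Zlat ν → ℝ) (C : ℝ) (hC : ∀ n, |V n| ≤ C)
    (f g : L2 (Zlat ν)) :
    Delta ν V C hC (f + g) (Uop ν (f - g)) =
      2 * quadForm (H0 ν - ((2 * (ν:ℝ) : ℝ) : ℂ) • 1) f +
        2 * quadForm (H0 ν - ((2 * (ν:ℝ) : ℝ) : ℂ) • 1) g +
        4 * (inner ℂ f (mulOp V C hC g)).re := by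
  set T := H0 ν - ((2 * (ν:ℝ) : ℝ) : ℂ) • 1
  set M := mulOp V C hC
  have hplus : schrodinger ν V C hC - ((2 * (ν:ℝ) : ℝ) : ℂ) • 1 = T + M := by
    simp only [T, M, schrodinger]
    abel
  have hminus : quadForm (-schrodinger ν V C hC - ((2 * (ν:ℝ) : ℝ) : ℂ) • 1) (Uop ν (f - g))
      = quadForm (T - M) (f - g) := by
    rw [quadForm, neg_schrodinger_sub_Uop, inner_Uop_Uop, ← quadForm]
  rw [Delta, hminus, hplus, quadForm_add, quadForm_sub T M]
  linarith [quadForm_add_add_quadForm_sub T f g,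
    quadForm_add_sub_quadForm_sub M (inner_mulOp_left V C hC) f g]

theorem statement0_general (ν : ℕ) (V : Zlat ν → ℝ) (C : ℝ) (hC : ∀ n, |V n| ≤ C)
    (f g : L2 (Zlat ν)) :
    Delta ν V C hC (f + g) (Uop ν (f - g)) ≥
      2 * quadForm (H0 ν - ((2 * (ν:ℝ) : ℝ) : ℂ) • 1) f - 8 * (ν:ℝ) * ‖g‖ ^ 2 +
        4 * (inner ℂ f (mulOp V C hC g) : ℂ).re := by
  have hg := neg_mul_norm_sq_le_quadForm_sub_smul_one (H0 ν) (norm_H0_le ν) g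
  rw [ge_iff_le, Delta_add_Uop_sub]
  linarith

/-- Proposition 2.1: for all `f, g ∈ ℓ²(ℤ^ν)`,
`Δ(f+g, U(f−g); V) ≥ 2⟨f,(H₀−2ν)f⟩ − 8ν‖g‖² + 4 Re⟨f, Vg⟩`. -/
theorem statement0 (ν : ℕ) (hν : 1 ≤ ν) (V : Zlat ν → ℝ) (C : ℝ) (hC : ∀ n, |V n| ≤ C)
    (f g : L2 (Zlat ν)) :
    Delta ν V C hC (f + g) (Uop ν (f - g)) ≥
      2 * quadForm (H0 ν - ((2 * (ν:ℝ) : ℝ) : ℂ) • 1) f - 8 * (ν:ℝ) * ‖g‖ ^ 2 +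
        4 * (inner ℂ f (mulOp V C hC g) : ℂ).re :=
  statement0_general ν V C hC f g

end DHKS
end
end

section
/- Let J = J({a_n},{b_n}) be a Jacobi matrix and let J₁ = J({a_n},{0}) be the Jacobi matrix with the same off-diagonal entries and zero diagonal. Set α = sup_n (a_n + a_{n+1}) and γ = (2 + α)⁻¹. Then for every φ ∈ ℓ²(ℤ⁺), with φ_± = (1 ± γ b)φ (pointwise multiplication), one has ⟨φ₊, (J − 2)φ₊⟩ + ⟨Uφ₋, (−2 − J)Uφ₋⟩ ≥ 2⟨φ, (J₁ − 2 + γ b²)φ⟩, where b² denotes multiplication by b(n)² and U is the unitary (Uφ)(n) = (−1)ⁿ φ(n). -/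
noncomputable section

open scoped ComplexConjugate

namespace DHKS

/-! ## Half-line operators on ℓ²(ℤ⁺), with ℤ⁺ = {1, 2, 3, …} realized as `ℕ+` -/

lemma pnat_succ_injective : Function.Injective (fun n : ℕ+ => n + 1) := by
  intro a b h
  have : (a : ℕ) + 1 = (b : ℕ) + 1 := by exact_mod_cast congrArg (fun x : ℕ+ => (x : ℕ)) h
  exact PNat.coe_injective (Nat.succ_injective this)

/-- The shift `(S u)(n) = u(n+1)` on `ℓ²(ℤ⁺)`. -/
def shiftUp : L2 ℕ+ →L[ℂ] L2 ℕ+ := compOp (fun n => n + 1) pnat_succ_injective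

/-- The shift `(D u)(n) = u(n-1)` for `n ≥ 2`, `(D u)(1) = 0` (the convention `u(0) = 0`). -/
def shiftDown : L2 ℕ+ →L[ℂ] L2 ℕ+ := extOp (fun n => n + 1) pnat_succ_injective

@[simp] lemma shiftUp_apply (u : L2 ℕ+) (n : ℕ+) :
    (shiftUp u : ℕ+ → ℂ) n = (u : ℕ+ → ℂ) (n + 1) := rfl

@[simp] lemma shiftDown_apply_succ (u : L2 ℕ+) (m : ℕ+) :
    (shiftDown u : ℕ+ → ℂ) (m + 1) = (u : ℕ+ → ℂ) m := by
  exact pnat_succ_injective.extend_apply _ _ m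

@[simp] lemma shiftDown_apply_one (u : L2 ℕ+) : (shiftDown u : ℕ+ → ℂ) 1 = 0 := by
  have h : ¬∃ m : ℕ+, m + 1 = 1 := by
    rintro ⟨m, hm⟩
    exact (PNat.lt_add_left 1 m).ne' hm
  exact Function.extend_apply' (u : ℕ+ → ℂ) (0 : ℕ+ → ℂ) (1 : ℕ+) (by simpa using h)

/-- The Jacobi matrix `(J u)(n) = aₙ u(n+1) + bₙ u(n) + a_{n-1} u(n-1)` (convention `u(0) = 0`)
on `ℓ²(ℤ⁺)`, for bounded sequences `a`, `b`. -/
def jacobiOp (a b : ℕ+ → ℝ) (Ca Cb : ℝ) (ha : ∀ n, |a n| ≤ Ca) (hb : ∀ n, |b n| ≤ Cb) :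
    L2 ℕ+ →L[ℂ] L2 ℕ+ :=
  mulOp a Ca ha ∘L shiftUp + mulOp b Cb hb + shiftDown ∘L mulOp a Ca ha

lemma jacobiOp_apply_succ (a b : ℕ+ → ℝ) (Ca Cb : ℝ) (ha : ∀ n, |a n| ≤ Ca)
    (hb : ∀ n, |b n| ≤ Cb) (u : L2 ℕ+) (m : ℕ+) :
    (jacobiOp a b Ca Cb ha hb u : ℕ+ → ℂ) (m + 1) =
      (a (m+1) : ℂ) * (u : ℕ+ → ℂ) (m + 2) + (b (m+1) : ℂ) * (u : ℕ+ → ℂ) (m + 1)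
        + (a m : ℂ) * (u : ℕ+ → ℂ) m := by
  have h2 : (m : ℕ+) + 2 = (m + 1) + 1 := by ring
  simp [jacobiOp, ContinuousLinearMap.add_apply, lp.coeFn_add, Pi.add_apply, h2]

lemma jacobiOp_apply_one (a b : ℕ+ → ℝ) (Ca Cb : ℝ) (ha : ∀ n, |a n| ≤ Ca)
    (hb : ∀ n, |b n| ≤ Cb) (u : L2 ℕ+) :
    (jacobiOp a b Ca Cb ha hb u : ℕ+ → ℂ) 1 =
      (a 1 : ℂ) * (u : ℕ+ → ℂ) 2 + (b 1 : ℂ) * (u : ℕ+ → ℂ) 1 := by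
  have h2 : (2 : ℕ+) = 1 + 1 := rfl
  simp [jacobiOp, ContinuousLinearMap.add_apply, lp.coeFn_add, Pi.add_apply, h2]

/-- The free half-line discrete Schrödinger operator `J₀`:  `(J₀ u)(n) = u(n+1) + u(n-1)`
with the convention `u(0) = 0`. -/
def J0 : L2 ℕ+ →L[ℂ] L2 ℕ+ := shiftUp + shiftDown

/-- The unitary `(U φ)(n) = (-1)^n φ(n)` on `ℓ²(ℤ⁺)`. -/
def UopHalf : L2 ℕ+ →L[ℂ] L2 ℕ+ :=
  mulOp (fun n => (-1 : ℝ) ^ (n : ℕ)) 1 (fun n => by simp [abs_pow])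

end DHKS

/-!
Write `J = J₁ + b` and `φ± = φ ± γ b φ`. Conjugation by `U` flips the sign of `J₁` and fixes `b`,
so the left-hand side is `⟨φ₊, (J₁ + b - 2) φ₊⟩ + ⟨φ₋, (J₁ - b - 2) φ₋⟩`. Expanding both forms,
the cross terms contribute `4γ‖bφ‖²`, and since `γ (2 + α) = 1` the difference of the two sides
is `2γ² (⟨ψ, J₁ ψ⟩ + α ‖ψ‖²)` with `ψ = b φ`. This is nonnegative:
`2 aₙ |Re (ψ̄ₙ ψₙ₊₁)| ≤ aₙ (|ψₙ|² + |ψₙ₊₁|²)`, and after summing over `n` each `|ψₙ|²` carries the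
weight `aₙ₋₁ + aₙ ≤ α`.
-/

namespace DHKS

open scoped InnerProductSpace

section

variable {E : Type*} [NormedAddCommGroup E] [InnerProductSpace ℂ E]

lemma neg_two_mul_re_inner_le (x y : E) : -(2 * (⟪x, y⟫_ℂ).re) ≤ ‖x‖ ^ 2 + ‖y‖ ^ 2 := by
  have h := norm_add_sq (𝕜 := ℂ) x y
  rw [RCLike.re_to_complex] at h
  nlinarith [sq_nonneg ‖x + y‖]

lemma re_inner_add_add_re_inner_sub (S B : E →L[ℂ] E) (φ x : E) :
    (⟪φ + x, (S + B) (φ + x)⟫_ℂ).re + (⟪φ - x, (S - B) (φ - x)⟫_ℂ).re =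
      2 * (⟪φ, S φ⟫_ℂ).re + 2 * (⟪x, S x⟫_ℂ).re + 2 * (⟪φ, B x⟫_ℂ).re
        + 2 * (⟪x, B φ⟫_ℂ).re := by
  simp only [add_apply, sub_apply, map_add, map_sub, inner_add_left, inner_add_right,
    inner_sub_left, inner_sub_right, Complex.add_re, Complex.sub_re]
  ring

theorem two_mul_re_inner_le_re_inner_pm (T B : E →L[ℂ] E) (hB : (B : E →ₗ[ℂ] E).IsSymmetric)
    {c A γ : ℝ} (hγ : γ * (c + A) = 1) (φ : E)
    (hT : -(A * ‖B φ‖ ^ 2) ≤ (⟪B φ, T (B φ)⟫_ℂ).re) :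
    2 * (⟪φ, (T - (c : ℂ) • 1 + (γ : ℂ) • (B ∘L B)) φ⟫_ℂ).re ≤
      (⟪(1 + (γ : ℂ) • B) φ, (T + B - (c : ℂ) • 1) ((1 + (γ : ℂ) • B) φ)⟫_ℂ).re +
        (⟪(1 - (γ : ℂ) • B) φ, (T - B - (c : ℂ) • 1) ((1 - (γ : ℂ) • B) φ)⟫_ℂ).re := by
  have hnorm (x : E) : (⟪x, x⟫_ℂ).re = ‖x‖ ^ 2 := inner_self_eq_norm_sq (𝕜 := ℂ) x
  have hsymm : (⟪φ, B (B φ)⟫_ℂ).re = ‖B φ‖ ^ 2 := by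
    rw [← hnorm]
    exact congrArg Complex.re (hB φ (B φ)).symm
  rw [show T + B - (c : ℂ) • 1 = (T - (c : ℂ) • 1) + B by abel,
    show T - B - (c : ℂ) • 1 = (T - (c : ℂ) • 1) - B by abel,
    show (1 + (γ : ℂ) • B) φ = φ + (γ : ℂ) • B φ from rfl,
    show (1 - (γ : ℂ) • B) φ = φ - (γ : ℂ) • B φ from rfl, re_inner_add_add_re_inner_sub]
  simp only [add_apply, sub_apply, smul_apply, one_apply_eq_self, ContinuousLinearMap.comp_apply,
    map_smul, inner_add_right, inner_sub_right, inner_smul_left, inner_smul_right,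
    Complex.conj_ofReal, Complex.add_re, Complex.sub_re, Complex.re_ofReal_mul, hsymm, hnorm]
  have key : 0 ≤ γ ^ 2 * ((⟪B φ, T (B φ)⟫_ℂ).re + A * ‖B φ‖ ^ 2) :=
    mul_nonneg (sq_nonneg γ) (by linarith)
  linear_combination 2 * key + (2 * γ * ‖B φ‖ ^ 2) * hγ

end

lemma summable_mul_of_nonneg_of_le {ι : Type*} {f g : ι → ℝ} {A : ℝ} (hf0 : ∀ i, 0 ≤ f i)
    (hfA : ∀ i, f i ≤ A) (hg0 : ∀ i, 0 ≤ g i) (hg : Summable g) :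
    Summable (fun i => f i * g i) :=
  (hg.mul_left A).of_nonneg_of_le (fun i => mul_nonneg (hf0 i) (hg0 i))
    (fun i => mul_le_mul_of_nonneg_right (hfA i) (hg0 i))

lemma tsum_pnat_eq_add_tsum_succ {f : ℕ+ → ℝ} (hf : Summable f) :
    ∑' n, f n = f 1 + ∑' n, f (n + 1) := by
  rw [← Equiv.pnatEquivNat.symm.tsum_eq, ← Equiv.pnatEquivNat.symm.tsum_eq (fun n => f (n + 1)),
    Summable.tsum_eq_zero_add (f := fun k => f (Equiv.pnatEquivNat.symm k))
      (hf.comp_injective Equiv.pnatEquivNat.symm.injective)]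
  rfl

lemma tsum_mul_add_shift_le {a u : ℕ+ → ℝ} {A : ℝ} (ha : ∀ n, 0 ≤ a n)
    (hA : ∀ n, a n + a (n + 1) ≤ A) (hu : ∀ n, 0 ≤ u n) (hs : Summable u) :
    ∑' n, a n * (u n + u (n + 1)) ≤ A * ∑' n, u n := by
  have haA (n : ℕ+) : a n ≤ A := by linarith [hA n, ha (n + 1)]
  have hs' : Summable (fun n => u (n + 1)) := hs.comp_injective pnat_succ_injective
  have h1 : Summable (fun n => a n * u n) := summable_mul_of_nonneg_of_le ha haA hu hs
  have h2 : Summable (fun n => a n * u (n + 1)) :=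
    summable_mul_of_nonneg_of_le ha haA (fun n => hu (n + 1)) hs'
  have h3 : Summable (fun n => a (n + 1) * u (n + 1)) :=
    summable_mul_of_nonneg_of_le (fun n => ha (n + 1)) (fun n => haA (n + 1))
      (fun n => hu (n + 1)) hs'
  calc ∑' n, a n * (u n + u (n + 1))
      = a 1 * u 1 + ∑' n, (a n + a (n + 1)) * u (n + 1) := by
        simp only [mul_add, add_mul]
        rw [h1.tsum_add h2, tsum_pnat_eq_add_tsum_succ h1, h2.tsum_add h3]
        ring
    _ ≤ A * u 1 + ∑' n, A * u (n + 1) :=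
        add_le_add (mul_le_mul_of_nonneg_right (haA 1) (hu 1))
          (Summable.tsum_le_tsum (fun n => mul_le_mul_of_nonneg_right (hA n) (hu (n + 1)))
            (by simpa only [add_mul] using h2.add h3) (hs'.mul_left A))
    _ = A * ∑' n, u n := by rw [tsum_mul_left, tsum_pnat_eq_add_tsum_succ hs, mul_add]

variable {α β : Type*}

lemma hasSum_norm_sq (u : L2 α) : HasSum (fun n => ‖(u : α → ℂ) n‖ ^ 2) (‖u‖ ^ 2) := by
  simpa only [inner_self_eq_norm_sq] using RCLike.hasSum_re ℂ (lp.hasSum_inner u u)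

lemma mulOp_isSymmetric (V : α → ℝ) (C : ℝ) (hC : ∀ n, |V n| ≤ C) :
    (mulOp V C hC : L2 α →ₗ[ℂ] L2 α).IsSymmetric := by
  intro u v
  simp only [ContinuousLinearMap.coe_coe, lp.inner_eq_tsum, mulOp_apply]
  congr 1 with n
  simp only [RCLike.inner_apply, map_mul, Complex.conj_ofReal]
  ring

lemma inner_extOp (σ : α → β) (hσ : Function.Injective σ) (u : L2 β) (v : L2 α) :
    ⟪u, extOp σ hσ v⟫_ℂ = ⟪compOp σ hσ u, v⟫_ℂ := by
  have hsupp : Function.support (fun m => ⟪(u : β → ℂ) m, (extOp σ hσ v : β → ℂ) m⟫_ℂ)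
      ⊆ Set.range σ := by
    intro m hm
    by_contra hr
    apply hm
    simp [extOp_apply, Function.extend_apply' _ _ _ hr]
  rw [lp.inner_eq_tsum, lp.inner_eq_tsum, ← hσ.tsum_eq hsupp]
  simp only [compOp_apply, extOp_apply, hσ.extend_apply]

lemma mulOp_zero (C : ℝ) (hC : ∀ _ : α, |(0 : ℝ)| ≤ C) :
    mulOp (fun _ : α => (0 : ℝ)) C hC = 0 := by
  ext u n
  simp

lemma mulOp_const_mul_sq (V : α → ℝ) (C γ : ℝ) (hC : ∀ n, |V n| ≤ C)
    (hC' : ∀ n, |γ * V n ^ 2| ≤ |γ| * C ^ 2) :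
    mulOp (fun n => γ * V n ^ 2) (|γ| * C ^ 2) hC' =
      (γ : ℂ) • (mulOp V C hC ∘L mulOp V C hC) := by
  ext u n
  simp only [mulOp_apply, smul_apply, ContinuousLinearMap.comp_apply, lp.coeFn_smul,
    Pi.smul_apply, smul_eq_mul]
  push_cast
  ring

lemma jacobiOp_eq_add_mulOp (a b : ℕ+ → ℝ) (Ca Cb : ℝ) (ha : ∀ n, |a n| ≤ Ca)
    (hb : ∀ n, |b n| ≤ Cb) (h0 : ∀ n : ℕ+, |(fun _ : ℕ+ => (0 : ℝ)) n| ≤ 0) :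
    jacobiOp a b Ca Cb ha hb = jacobiOp a (fun _ => 0) Ca 0 ha h0 + mulOp b Cb hb := by
  rw [jacobiOp, jacobiOp, mulOp_zero]
  abel

lemma re_inner_jacobiOp_zero (a : ℕ+ → ℝ) (Ca : ℝ) (ha : ∀ n, |a n| ≤ Ca)
    (h0 : ∀ n : ℕ+, |(fun _ : ℕ+ => (0 : ℝ)) n| ≤ 0) (ψ : L2 ℕ+) :
    (⟪ψ, jacobiOp a (fun _ => 0) Ca 0 ha h0 ψ⟫_ℂ).re =
      2 * (⟪ψ, mulOp a Ca ha (shiftUp ψ)⟫_ℂ).re := by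
  have hadj : ⟪ψ, shiftDown (mulOp a Ca ha ψ)⟫_ℂ =
      conj ⟪ψ, mulOp a Ca ha (shiftUp ψ)⟫_ℂ := by
    rw [shiftDown, inner_extOp, ← shiftUp, inner_conj_symm]
    exact (mulOp_isSymmetric a Ca ha _ _).symm
  simp only [jacobiOp, mulOp_zero, add_zero, add_apply, ContinuousLinearMap.comp_apply,
    inner_add_right, hadj, Complex.add_re, Complex.conj_re]
  ring

lemma neg_mul_norm_sq_le_re_inner_jacobiOp_zero {a : ℕ+ → ℝ} {A : ℝ} (hapos : ∀ n, 0 ≤ a n)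
    (hA : ∀ n, a n + a (n + 1) ≤ A) (Ca : ℝ) (ha : ∀ n, |a n| ≤ Ca)
    (h0 : ∀ n : ℕ+, |(fun _ : ℕ+ => (0 : ℝ)) n| ≤ 0) (ψ : L2 ℕ+) :
    -(A * ‖ψ‖ ^ 2) ≤ (⟪ψ, jacobiOp a (fun _ => 0) Ca 0 ha h0 ψ⟫_ℂ).re := by
  have hu := hasSum_norm_sq ψ
  have hterm (x y : ℂ) (r : ℝ) : (⟪x, (r : ℂ) * y⟫_ℂ).re = r * (⟪x, y⟫_ℂ).re := by
    rw [← smul_eq_mul, inner_smul_right, Complex.re_ofReal_mul]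
  have hS : HasSum (fun n => a n * (⟪ψ n, ψ (n + 1)⟫_ℂ).re)
      (⟪ψ, mulOp a Ca ha (shiftUp ψ)⟫_ℂ).re := by
    simpa only [mulOp_apply, shiftUp_apply, RCLike.re_to_complex, hterm] using
      RCLike.hasSum_re ℂ (lp.hasSum_inner ψ (mulOp a Ca ha (shiftUp ψ)))
  have hpt (n : ℕ+) : -(a n * (‖ψ n‖ ^ 2 + ‖ψ (n + 1)‖ ^ 2)) ≤
      2 * (a n * (⟪ψ n, ψ (n + 1)⟫_ℂ).re) := by
    nlinarith [mul_le_mul_of_nonneg_left (neg_two_mul_re_inner_le (ψ n) (ψ (n + 1))) (hapos n)]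
  have haA (n : ℕ+) : a n ≤ A := by linarith [hA n, hapos (n + 1)]
  have hsum : Summable (fun n => a n * (‖ψ n‖ ^ 2 + ‖ψ (n + 1)‖ ^ 2)) :=
    summable_mul_of_nonneg_of_le hapos haA (fun n => by positivity)
      (hu.summable.add (hu.summable.comp_injective pnat_succ_injective))
  rw [re_inner_jacobiOp_zero, ← hu.tsum_eq, ← (hS.mul_left 2).tsum_eq]
  calc -(A * ∑' n, ‖ψ n‖ ^ 2)
      ≤ -∑' n, a n * (‖ψ n‖ ^ 2 + ‖ψ (n + 1)‖ ^ 2) :=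
        neg_le_neg (tsum_mul_add_shift_le hapos hA (fun n => by positivity) hu.summable)
    _ ≤ ∑' n, 2 * (a n * (⟪ψ n, ψ (n + 1)⟫_ℂ).re) := by
        rw [← tsum_neg]
        exact Summable.tsum_le_tsum hpt hsum.neg (hS.mul_left 2).summable

lemma UopHalf_apply (u : L2 ℕ+) (n : ℕ+) :
    (UopHalf u : ℕ+ → ℂ) n = (((-1 : ℝ) ^ (n : ℕ) : ℝ) : ℂ) * (u : ℕ+ → ℂ) n := rfl

lemma UopHalf_UopHalf (u : L2 ℕ+) : UopHalf (UopHalf u) = u := by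
  ext n
  simp only [UopHalf_apply, ← mul_assoc, ← Complex.ofReal_mul, ← mul_pow]
  norm_num

lemma inner_UopHalf_UopHalf (u v : L2 ℕ+) : ⟪UopHalf u, UopHalf v⟫_ℂ = ⟪u, v⟫_ℂ := by
  rw [UopHalf, ← ContinuousLinearMap.coe_coe, mulOp_isSymmetric, ContinuousLinearMap.coe_coe,
    ← UopHalf, UopHalf_UopHalf]

lemma jacobiOp_UopHalf (a b : ℕ+ → ℝ) (Ca Cb : ℝ) (ha : ∀ n, |a n| ≤ Ca)
    (hb : ∀ n, |b n| ≤ Cb) (h0 : ∀ n : ℕ+, |(fun _ : ℕ+ => (0 : ℝ)) n| ≤ 0) (χ : L2 ℕ+) :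
    jacobiOp a b Ca Cb ha hb (UopHalf χ) =
      UopHalf (mulOp b Cb hb χ - jacobiOp a (fun _ => 0) Ca 0 ha h0 χ) := by
  ext n
  induction n using PNat.recOn with
  | one =>
    simp only [jacobiOp_apply_one, UopHalf_apply, lp.coeFn_sub, Pi.sub_apply, mulOp_apply]
    have h2 : ((2 : ℕ+) : ℕ) = 2 := rfl
    simp only [PNat.one_coe, h2]
    push_cast
    ring
  | succ m _ =>
    simp only [jacobiOp_apply_succ, UopHalf_apply, lp.coeFn_sub, Pi.sub_apply, mulOp_apply]
    have h2 : ((m + 2 : ℕ+) : ℕ) = m + 2 := rfl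
    simp only [PNat.add_coe, PNat.one_coe, h2]
    push_cast
    ring

lemma re_inner_UopHalf_neg_sub_jacobiOp (a b : ℕ+ → ℝ) (Ca Cb c : ℝ) (ha : ∀ n, |a n| ≤ Ca)
    (hb : ∀ n, |b n| ≤ Cb) (h0 : ∀ n : ℕ+, |(fun _ : ℕ+ => (0 : ℝ)) n| ≤ 0) (χ : L2 ℕ+) :
    (⟪UopHalf χ, (-((c : ℂ) • 1) - jacobiOp a b Ca Cb ha hb) (UopHalf χ)⟫_ℂ).re =
      (⟪χ, (jacobiOp a (fun _ => 0) Ca 0 ha h0 - mulOp b Cb hb - (c : ℂ) • 1) χ⟫_ℂ).re := by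
  have hU : (-((c : ℂ) • 1) - jacobiOp a b Ca Cb ha hb) (UopHalf χ) =
      UopHalf ((jacobiOp a (fun _ => 0) Ca 0 ha h0 - mulOp b Cb hb - (c : ℂ) • 1) χ) := by
    simp only [sub_apply, neg_apply, smul_apply, one_apply_eq_self,
      jacobiOp_UopHalf _ _ _ _ _ _ h0, map_sub, map_smul]
    abel
  rw [hU, inner_UopHalf_UopHalf]

/-- Theorem 2.4: for every `φ ∈ ℓ²(ℤ⁺)`, with `φ± = (1 ± γ b)φ`,
`⟨φ₊, (J−2)φ₊⟩ + ⟨Uφ₋, (−2−J)Uφ₋⟩ ≥ 2⟨φ, (J₁ − 2 + γ b²)φ⟩`,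
where `α = sup_n (aₙ + aₙ₊₁)` and `γ = (2+α)⁻¹`. -/
theorem statement2 (a b : ℕ+ → ℝ) (Ca Cb : ℝ) (hapos : ∀ n, 0 < a n)
    (ha : ∀ n, |a n| ≤ Ca) (hb : ∀ n, |b n| ≤ Cb)
    (γ : ℝ) (hγ : γ = (2 + ⨆ n, (a n + a (n + 1)))⁻¹) (φ : L2 ℕ+) :
    quadForm (jacobiOp a b Ca Cb ha hb - ((2:ℝ):ℂ) • 1)
        ((1 + ((γ:ℝ):ℂ) • mulOp b Cb hb) φ) +
      quadForm (-(((2:ℝ):ℂ) • 1) - jacobiOp a b Ca Cb ha hb)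
        (UopHalf ((1 - ((γ:ℝ):ℂ) • mulOp b Cb hb) φ)) ≥
      2 * quadForm
        (jacobiOp a (fun _ => 0) Ca 0 ha (fun n => by simp) - ((2:ℝ):ℂ) • 1 +
          mulOp (fun n => γ * b n ^ 2) (|γ| * Cb ^ 2) (fun n => abs_mul_sq_le (hb n))) φ := by
  set A := ⨆ n, (a n + a (n + 1))
  have hbdd : BddAbove (Set.range fun n => a n + a (n + 1)) :=
    ⟨2 * Ca, by rintro _ ⟨n, rfl⟩; linarith [(abs_le.1 (ha n)).2, (abs_le.1 (ha (n + 1))).2]⟩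
  have hle (n : ℕ+) : a n + a (n + 1) ≤ A := le_ciSup hbdd n
  have hγA : γ * (2 + A) = 1 := by
    rw [hγ]
    exact inv_mul_cancel₀ (by linarith [hle 1, hapos 1, hapos (1 + 1)])
  have h0 : ∀ n : ℕ+, |(fun _ : ℕ+ => (0 : ℝ)) n| ≤ 0 := fun _ => by simp
  unfold quadForm
  rw [re_inner_UopHalf_neg_sub_jacobiOp a b Ca Cb 2 ha hb h0,
    jacobiOp_eq_add_mulOp a b Ca Cb ha hb h0, mulOp_const_mul_sq b Cb γ hb]
  exact two_mul_re_inner_le_re_inner_pm _ _ (mulOp_isSymmetric b Cb hb) hγA φ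
    (neg_mul_norm_sq_le_re_inner_jacobiOp_zero (fun n => (hapos n).le) hle Ca ha h0 _)

end DHKS
end
end

section
/- There exist constants 0 < c₁ ≤ c₂ < ∞ such that for all integers L₁, L₂ ≥ 1 there exists φ ∈ ℓ²(ℤ) supported in {n ∈ ℤ : −L₁ ≤ n ≤ L₂} with: (i) φ(0) = 1; (ii) ⟨φ, (2 − H₀)φ⟩ = (L₁ + 1)⁻¹ + (L₂ + 1)⁻¹; and (iii) c₁(L₁ + L₂) ≤ ‖φ‖² ≤ c₂(L₁ + L₂). -/
noncomputable section

open scoped ComplexConjugate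

namespace DHKS

/-! ## The free operator on ℓ²(ℤ) -/

/-- The free discrete Schrödinger operator `(H₀ u)(n) = u(n+1) + u(n-1)` on `ℓ²(ℤ)`. -/
def H0Z : L2 ℤ →L[ℂ] L2 ℤ :=
  compOp (fun n : ℤ => n + 1) (add_left_injective _) +
    compOp (fun n : ℤ => n - 1) (fun x y h => by simpa using h)

@[simp] lemma H0Z_apply (u : L2 ℤ) (n : ℤ) :
    (H0Z u : ℤ → ℂ) n = (u : ℤ → ℂ) (n + 1) + (u : ℤ → ℂ) (n - 1) := by
  simp [H0Z, ContinuousLinearMap.add_apply, lp.coeFn_add, Pi.add_apply]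
  rfl

end DHKS

/-! The test function is the tent `φ` that is affine on `[-(L₁+1), 0]` and on `[0, L₂+1]`, with
`φ(0) = 1` and vanishing at both ends. Being affine on each side, its discrete Laplacian
`2φ(n) - φ(n+1) - φ(n-1)` vanishes at every point of the support except the kink `n = 0`, so
`⟨φ, (2 - H₀)φ⟩ = φ(0)(2 - φ(1) - φ(-1)) = (L₁+1)⁻¹ + (L₂+1)⁻¹`. Since `1/2 ≤ φ ≤ 1` on the middle
half of the support and `0 ≤ φ ≤ 1` everywhere, `‖φ‖²` lies between `(L₁+L₂)/8` and `2(L₁+L₂)`. -/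

namespace DHKS

def tent (a b x : ℝ) : ℝ := max 0 (min (1 - x / b) (1 + x / a))

section Tent

variable {a b x : ℝ}

lemma tent_nonneg : 0 ≤ tent a b x := le_max_left _ _

@[simp] lemma tent_zero : tent a b 0 = 1 := by simp [tent]

lemma tent_le_one (ha : 0 < a) (hb : 0 < b) : tent a b x ≤ 1 := by
  refine max_le zero_le_one ?_
  rcases le_total 0 x with hx | hx
  · exact (min_le_left _ _).trans (by linarith [div_nonneg hx hb.le])
  · exact (min_le_right _ _).trans (by linarith [div_nonpos_of_nonpos_of_nonneg hx ha.le])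

lemma tent_of_nonneg (ha : 0 < a) (hb : 0 < b) (hx : 0 ≤ x) (hxb : x ≤ b) :
    tent a b x = 1 - x / b := by
  have hxb' : x / b ≤ 1 := (div_le_one hb).2 hxb
  have : min (1 - x / b) (1 + x / a) = 1 - x / b :=
    min_eq_left (by linarith [div_nonneg hx hb.le, div_nonneg hx ha.le])
  rw [tent, this, max_eq_right (by linarith)]

lemma tent_of_nonpos (ha : 0 < a) (hb : 0 < b) (hax : -a ≤ x) (hx : x ≤ 0) :
    tent a b x = 1 + x / a := by
  have hax' : -1 ≤ x / a := by rwa [le_div_iff₀ ha, neg_one_mul]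
  have : min (1 - x / b) (1 + x / a) = 1 + x / a :=
    min_eq_right (by linarith [div_nonpos_of_nonpos_of_nonneg hx hb.le,
      div_nonpos_of_nonpos_of_nonneg hx ha.le])
  rw [tent, this, max_eq_right (by linarith)]

lemma mem_Ioo_of_tent_ne_zero (ha : 0 < a) (hb : 0 < b) (h : tent a b x ≠ 0) :
    -a < x ∧ x < b := by
  have hpos : 0 < min (1 - x / b) (1 + x / a) := by
    by_contra hle
    exact h (max_eq_left (not_lt.1 hle))
  obtain ⟨hright, hleft⟩ := lt_min_iff.1 hpos
  constructor
  · have : -1 < x / a := by linarith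
    rwa [lt_div_iff₀ ha, neg_one_mul] at this
  · exact (div_lt_one hb).1 (by linarith)

lemma half_le_tent (ha : 0 < a) (hb : 0 < b) (hax : -a ≤ 2 * x) (hxb : 2 * x ≤ b) :
    1 / 2 ≤ tent a b x := by
  rcases le_total 0 x with hx | hx
  · rw [tent_of_nonneg ha hb hx (by linarith)]
    have : x / b ≤ 1 / 2 := by rw [div_le_iff₀ hb]; linarith
    linarith
  · rw [tent_of_nonpos ha hb (by linarith) hx]
    have : -(1 / 2) ≤ x / a := by rw [le_div_iff₀ ha]; linarith
    linarith

lemma two_sub_tent_one_sub_tent_neg_one (ha : 1 ≤ a) (hb : 1 ≤ b) :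
    2 - tent a b 1 - tent a b (-1) = a⁻¹ + b⁻¹ := by
  rw [tent_of_nonneg (by linarith) (by linarith) zero_le_one hb,
    tent_of_nonpos (by linarith) (by linarith) (by linarith) (by norm_num)]
  ring

end Tent

section IntTent

variable {L₁ L₂ n : ℤ}

lemma tent_intCast_eq_zero (hL₁ : 0 ≤ L₁) (hL₂ : 0 ≤ L₂) (hn : n ∉ Finset.Icc (-L₁) L₂) :
    tent (L₁ + 1) (L₂ + 1) n = 0 := by
  by_contra h
  obtain ⟨h1, h2⟩ := mem_Ioo_of_tent_ne_zero (by positivity) (by positivity) h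
  have h1' : -(L₁ + 1) < n := by exact_mod_cast h1
  have h2' : n < L₂ + 1 := by exact_mod_cast h2
  exact hn (Finset.mem_Icc.2 ⟨by omega, by omega⟩)

/-- Away from the kink the tent is affine, so its second difference vanishes. -/
lemma tent_intCast_sub_one_add_tent_intCast_add_one (hL₁ : 0 ≤ L₁) (hL₂ : 0 ≤ L₂) (hn : n ≠ 0)
    (hn₁ : -L₁ ≤ n) (hn₂ : n ≤ L₂) :
    tent (L₁ + 1) (L₂ + 1) ((n - 1 : ℤ) : ℝ) + tent (L₁ + 1) (L₂ + 1) ((n + 1 : ℤ) : ℝ) =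
      2 * tent (L₁ + 1) (L₂ + 1) n := by
  have ha : (0 : ℝ) < L₁ + 1 := by positivity
  have hb : (0 : ℝ) < L₂ + 1 := by positivity
  have hn₁' : (-L₁ : ℝ) ≤ n := by exact_mod_cast hn₁
  have hn₂' : (n : ℝ) ≤ L₂ := by exact_mod_cast hn₂
  push_cast
  rcases lt_or_gt_of_ne hn with hneg | hpos
  · have : (n : ℝ) ≤ -1 := by exact_mod_cast Int.le_sub_one_of_lt hneg
    rw [tent_of_nonpos ha hb (by linarith) (by linarith),
      tent_of_nonpos ha hb (by linarith) (by linarith),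
      tent_of_nonpos ha hb (by linarith) (by linarith)]
    ring
  · have : (1 : ℝ) ≤ n := by exact_mod_cast hpos
    rw [tent_of_nonneg ha hb (by linarith) (by linarith),
      tent_of_nonneg ha hb (by linarith) (by linarith),
      tent_of_nonneg ha hb (by linarith) (by linarith)]
    ring

lemma sum_tent_intCast_sq_le (hL₁ : 0 ≤ L₁) (hL₂ : 0 ≤ L₂) :
    ∑ n ∈ Finset.Icc (-L₁) L₂, tent (L₁ + 1) (L₂ + 1) n ^ 2 ≤ L₁ + L₂ + 1 := by
  have hcard : ((Finset.Icc (-L₁) L₂).card : ℝ) = L₁ + L₂ + 1 := by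
    have : ((Finset.Icc (-L₁) L₂).card : ℤ) = L₁ + L₂ + 1 := by
      rw [Int.card_Icc]
      omega
    exact_mod_cast this
  calc ∑ n ∈ Finset.Icc (-L₁) L₂, tent (L₁ + 1) (L₂ + 1) n ^ 2
      ≤ ∑ _n ∈ Finset.Icc (-L₁) L₂, (1 : ℝ) :=
        Finset.sum_le_sum fun _ _ =>
          pow_le_one₀ tent_nonneg (tent_le_one (by positivity) (by positivity))
    _ = L₁ + L₂ + 1 := by rw [Finset.sum_const, nsmul_one, hcard]

/-- The tent is at least `1/2` on the middle half `[-⌊L₁/2⌋, ⌊L₂/2⌋]` of its support. -/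
lemma le_sum_tent_intCast_sq (hL₁ : 0 ≤ L₁) (hL₂ : 0 ≤ L₂) :
    (L₁ + L₂ : ℝ) / 8 ≤ ∑ n ∈ Finset.Icc (-L₁) L₂, tent (L₁ + 1) (L₂ + 1) n ^ 2 := by
  set S := Finset.Icc (-(L₁ / 2)) (L₂ / 2)
  have hcard : (L₁ + L₂ : ℝ) ≤ 2 * S.card := by
    have : L₁ + L₂ ≤ 2 * (S.card : ℤ) := by
      rw [Int.card_Icc, Int.toNat_of_nonneg (by omega)]
      omega
    exact_mod_cast this
  have hhalf : ∀ n ∈ S, (1 / 4 : ℝ) ≤ tent (L₁ + 1) (L₂ + 1) n ^ 2 := by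
    intro n hn
    obtain ⟨h1, h2⟩ := Finset.mem_Icc.1 hn
    have h1' : (-L₁ : ℝ) ≤ 2 * n := by exact_mod_cast (by omega : -L₁ ≤ 2 * n)
    have h2' : (2 * n : ℝ) ≤ L₂ := by exact_mod_cast (by omega : 2 * n ≤ L₂)
    have := half_le_tent (a := L₁ + 1) (b := L₂ + 1) (x := n) (by positivity) (by positivity)
      (by linarith) (by linarith)
    nlinarith
  calc (L₁ + L₂ : ℝ) / 8 ≤ ∑ _n ∈ S, (1 / 4 : ℝ) := by
        rw [Finset.sum_const, nsmul_eq_mul]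
        linarith
    _ ≤ ∑ n ∈ S, tent (L₁ + 1) (L₂ + 1) n ^ 2 := Finset.sum_le_sum hhalf
    _ ≤ ∑ n ∈ Finset.Icc (-L₁) L₂, tent (L₁ + 1) (L₂ + 1) n ^ 2 :=
        Finset.sum_le_sum_of_subset_of_nonneg
          (fun n hn => by simp only [S, Finset.mem_Icc] at hn ⊢; omega)
          (fun n _ _ => sq_nonneg _)

end IntTent

section L2

variable {α : Type*}

lemma memℓp_of_forall_notMem_eq_zero {E : α → Type*} [∀ i, NormedAddCommGroup (E i)]
    {p : ENNReal} {f : ∀ i, E i} (s : Finset α) (hf : ∀ i ∉ s, f i = 0) : Memℓp f p :=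
  (memℓp_zero (s.finite_toSet.subset fun i hi => by_contra fun hs => hi (hf i hs))).of_exponent_ge
    zero_le

lemma norm_sq_eq_sum_of_forall_notMem_eq_zero (u : L2 α) (s : Finset α)
    (hu : ∀ n ∉ s, (u : α → ℂ) n = 0) : ‖u‖ ^ 2 = ∑ n ∈ s, ‖(u : α → ℂ) n‖ ^ 2 := by
  have h := lp.norm_rpow_eq_tsum (p := 2) (by norm_num) u
  norm_num at h
  rw [h, tsum_eq_sum fun n hn => by simp [hu n hn]]

end L2

lemma two_sub_H0Z_apply (u : L2 ℤ) (n : ℤ) :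
    (((((2:ℝ)):ℂ) • 1 - H0Z) u : ℤ → ℂ) n =
      2 * (u : ℤ → ℂ) n - (u : ℤ → ℂ) (n + 1) - (u : ℤ → ℂ) (n - 1) := by
  simp only [sub_apply, smul_apply, one_apply_eq_self, lp.coeFn_sub, lp.coeFn_smul,
    Pi.sub_apply, Pi.smul_apply, smul_eq_mul, H0Z_apply]
  push_cast
  ring

lemma inner_two_sub_H0Z_eq_of_secondDiff_eq_zero {u : L2 ℤ} {f : ℤ → ℝ}
    (hu : ∀ n, (u : ℤ → ℂ) n = f n)
    (hf : ∀ n ≠ 0, f n ≠ 0 → f (n - 1) + f (n + 1) = 2 * f n) :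
    inner ℂ u (((((2:ℝ)):ℂ) • 1 - H0Z) u) = ((f 0 * (2 * f 0 - f 1 - f (-1)) : ℝ) : ℂ) := by
  rw [lp.inner_eq_tsum, tsum_eq_single 0]
  · simp only [RCLike.inner_apply, two_sub_H0Z_apply, hu, Complex.conj_ofReal]
    push_cast
    ring
  · intro n hn
    rw [RCLike.inner_apply, two_sub_H0Z_apply]
    rcases eq_or_ne (f n) 0 with h | h
    · simp [hu, h]
    · have hΔ : 2 * f n - f (n + 1) - f (n - 1) = 0 := by linarith [hf n hn h]
      refine mul_eq_zero_of_left ?_ _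
      simp only [hu]
      exact_mod_cast hΔ

/-- Proposition 4.3: there are constants `0 < c₁ ≤ c₂ < ∞` such that for
all `L₁, L₂ ≥ 1` there is `φ ∈ ℓ²(ℤ)` supported in `[-L₁, L₂]` with `φ(0) = 1`,
`⟨φ, (2−H₀)φ⟩ = (L₁+1)⁻¹ + (L₂+1)⁻¹` and `c₁(L₁+L₂) ≤ ‖φ‖² ≤ c₂(L₁+L₂)`. -/
theorem statement7 :
    ∃ c₁ c₂ : ℝ, 0 < c₁ ∧ c₁ ≤ c₂ ∧
      ∀ L₁ L₂ : ℤ, 1 ≤ L₁ → 1 ≤ L₂ →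
        ∃ φ : L2 ℤ,
          (∀ n : ℤ, (φ : ℤ → ℂ) n ≠ 0 → -L₁ ≤ n ∧ n ≤ L₂) ∧
          (φ : ℤ → ℂ) 0 = 1 ∧
          (inner ℂ φ (((((2:ℝ)):ℂ) • 1 - H0Z) φ) : ℂ) =
            ((((L₁:ℝ) + 1)⁻¹ + ((L₂:ℝ) + 1)⁻¹ : ℝ) : ℂ) ∧
          c₁ * ((L₁:ℝ) + (L₂:ℝ)) ≤ ‖φ‖ ^ 2 ∧ ‖φ‖ ^ 2 ≤ c₂ * ((L₁:ℝ) + (L₂:ℝ)) := by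
  refine ⟨1 / 8, 2, by norm_num, by norm_num, fun L₁ L₂ hL₁ hL₂ => ?_⟩
  have hL₁' : 0 ≤ L₁ := by omega
  have hL₂' : 0 ≤ L₂ := by omega
  have hL₁ℝ : (1 : ℝ) ≤ L₁ := by exact_mod_cast hL₁
  have hL₂ℝ : (1 : ℝ) ≤ L₂ := by exact_mod_cast hL₂
  set f : ℤ → ℝ := fun n => tent (L₁ + 1) (L₂ + 1) n
  have hsupp : ∀ n ∉ Finset.Icc (-L₁) L₂, f n = 0 := fun n => tent_intCast_eq_zero hL₁' hL₂'
  let φ : L2 ℤ := ⟨fun n => f n,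
    memℓp_of_forall_notMem_eq_zero (Finset.Icc (-L₁) L₂) fun n hn => by simp [hsupp n hn]⟩
  have hnorm : ‖φ‖ ^ 2 = ∑ n ∈ Finset.Icc (-L₁) L₂, tent (L₁ + 1) (L₂ + 1) n ^ 2 := by
    rw [norm_sq_eq_sum_of_forall_notMem_eq_zero φ (Finset.Icc (-L₁) L₂)
      fun n hn => by simp [φ, hsupp n hn]]
    simp [φ, f]
  have hharm : ∀ n ≠ 0, f n ≠ 0 → f (n - 1) + f (n + 1) = 2 * f n := fun n hn hfn =>
    have ⟨hn₁, hn₂⟩ := Finset.mem_Icc.1 (not_not.1 (mt (hsupp n) hfn))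
    tent_intCast_sub_one_add_tent_intCast_add_one hL₁' hL₂' hn hn₁ hn₂
  refine ⟨φ, fun n hn => Finset.mem_Icc.1 (not_not.1 fun h => hn (by simp [φ, hsupp n h])),
    by simp [φ, f], ?_, ?_, ?_⟩
  · rw [inner_two_sub_H0Z_eq_of_secondDiff_eq_zero (fun n => rfl) hharm, Complex.ofReal_inj,
      ← two_sub_tent_one_sub_tent_neg_one (by linarith) (by linarith)]
    simp [f]
  · rw [hnorm]
    linarith [le_sum_tent_intCast_sq hL₁' hL₂']
  · rw [hnorm]
    linarith [sum_tent_intCast_sq_le hL₁' hL₂']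

end DHKS
end
end

section
/- There exist constants 0 < c₁ ≤ c₂ < ∞ such that for every integer L ≥ 2 there exists φ_L ∈ ℓ²(ℤ²) supported in {(n₁,n₂) ∈ ℤ² : |n₁| + |n₂| ≤ L} with: (i) φ_L(0,0) = 1; (ii) 0 ≤ ⟨φ_L, (4 − H₀)φ_L⟩ ≤ c₂ / log(L+1); and (iii) c₁ L²/(log(L+1))² ≤ ‖φ_L‖² ≤ c₂ L²/(log(L+1))². -/
/-!
Take `φ_L(n) = (1 - log (|n|₁ + 1) / log (L + 1))₊`. Summation by parts turns
`⟨φ, (4 - H₀) φ⟩` into half the sum of the squared nearest-neighbour differences of `φ`. The profile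
is logarithmic, so such a difference at `n` is at most `2 / ((|n|₁ + 1) log (L + 1))`, and
`∑_{|n|_∞ ≤ L} (|n|₁ + 1)⁻² = O(log L)` (sum over one coordinate first) gives the bound
`O(1 / log (L + 1))`. For the norm, `log y ≤ 2 √y` gives
`φ_L(n)² ≤ 4 (L + 1) / ((|n|₁ + 1) log² (L + 1))`, and `(|a| + 1)(|b| + 1) ≤ (|a| + |b| + 1)²`
factorises `∑ (|n|₁ + 1)⁻¹` into `(∑_{|a| ≤ L} (|a| + 1)^{-1/2})² = O(L)`. Conversely
`φ_L ≥ log 2 / log (L + 1)` on a box of side comparable to `L`.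
-/

noncomputable section

open scoped ComplexConjugate

namespace DHKS

/-! ## The free operator on ℓ²(ℤ²) -/

/-- The free discrete Schrödinger operator on `ℓ²(ℤ²)`:
`(H₀ u)(n) = ∑_{|j|₁=1} u(n+j)`, the sum over the four nearest neighbors. -/
def H0Z2 : L2 (ℤ × ℤ) →L[ℂ] L2 (ℤ × ℤ) :=
  compOp (fun n : ℤ × ℤ => n + (1, 0)) (add_left_injective _) +
    compOp (fun n : ℤ × ℤ => n + (-1, 0)) (add_left_injective _) +
    compOp (fun n : ℤ × ℤ => n + (0, 1)) (add_left_injective _) +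
    compOp (fun n : ℤ × ℤ => n + (0, -1)) (add_left_injective _)

@[simp] lemma H0Z2_apply (u : L2 (ℤ × ℤ)) (n : ℤ × ℤ) :
    (H0Z2 u : ℤ × ℤ → ℂ) n = (u : ℤ × ℤ → ℂ) (n + (1, 0)) + (u : ℤ × ℤ → ℂ) (n + (-1, 0)) +
      (u : ℤ × ℤ → ℂ) (n + (0, 1)) + (u : ℤ × ℤ → ℂ) (n + (0, -1)) := by
  simp [H0Z2, ContinuousLinearMap.add_apply, lp.coeFn_add, Pi.add_apply]

end DHKS

namespace DHKS

open Finset Real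

theorem sum_comp_add_right_of_support_subset {G M : Type*} [AddGroup G] [AddCommMonoid M]
    {g : G → M} {s : Finset G} (j : G)
    (hg : ∀ n ∉ s, g n = 0) (hgj : ∀ n ∉ s, g (n + j) = 0) :
    ∑ n ∈ s, g (n + j) = ∑ n ∈ s, g n := by
  rw [← finsum_eq_sum_of_support_subset _ (Function.support_subset_iff'.2 hgj),
    ← finsum_eq_sum_of_support_subset _ (Function.support_subset_iff'.2 hg)]
  exact finsum_comp_equiv (Equiv.addRight j)

theorem norm_sq_eq_sum_of_support_subset {α : Type*} (u : L2 α) (s : Finset α)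
    (hs : ∀ n ∉ s, (u : α → ℂ) n = 0) :
    ‖u‖ ^ 2 = ∑ n ∈ s, ‖(u : α → ℂ) n‖ ^ 2 := by
  have h := lp.norm_rpow_eq_tsum (p := 2) (by norm_num) u
  simp only [ENNReal.toReal_ofNat, rpow_ofNat] at h
  rw [h, tsum_eq_sum fun n hn => by simp [hs n hn]]

def unitVectors : Finset (ℤ × ℤ) := {(1, 0), (-1, 0), (0, 1), (0, -1)}

theorem card_unitVectors : #unitVectors = 4 := by decide

theorem H0Z2_apply_eq_sum (u : L2 (ℤ × ℤ)) (n : ℤ × ℤ) :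
    (H0Z2 u : ℤ × ℤ → ℂ) n = ∑ j ∈ unitVectors, (u : ℤ × ℤ → ℂ) (n + j) := by
  simp [unitVectors, add_assoc]

theorem quadForm_four_sub_H0Z2 (φ : L2 (ℤ × ℤ)) (f : ℤ × ℤ → ℝ)
    (hφ : ∀ n, (φ : ℤ × ℤ → ℂ) n = f n) (s : Finset (ℤ × ℤ)) (hf : ∀ n ∉ s, f n = 0)
    (hfj : ∀ j ∈ unitVectors, ∀ n ∉ s, f (n + j) = 0) :
    quadForm (((4 : ℝ) : ℂ) • 1 - H0Z2) φ =
      ∑ j ∈ unitVectors, (∑ n ∈ s, (f n - f (n + j)) ^ 2) / 2 := by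
  have hpoint : ∀ n, inner ℂ ((φ : ℤ × ℤ → ℂ) n) (((((4 : ℝ) : ℂ) • 1 - H0Z2) φ : ℤ × ℤ → ℂ) n)
      = ((∑ j ∈ unitVectors, (f n ^ 2 - f n * f (n + j)) : ℝ) : ℂ) := by
    intro n
    rw [RCLike.inner_apply, sub_apply, lp.coeFn_sub, Pi.sub_apply, smul_apply, lp.coeFn_smul,
      Pi.smul_apply, smul_eq_mul, one_apply_eq_self, H0Z2_apply_eq_sum]
    simp only [hφ, Complex.conj_ofReal, sum_sub_distrib, sum_const, card_unitVectors, nsmul_eq_mul,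
      ← mul_sum]
    push_cast
    ring
  -- translating by `j` does not change `∑ f ^ 2`, so the cross term is half a squared difference
  have hcross : ∀ j ∈ unitVectors, ∑ n ∈ s, (f n ^ 2 - f n * f (n + j))
      = (∑ n ∈ s, (f n - f (n + j)) ^ 2) / 2 := by
    intro j hj
    have hshift := sum_comp_add_right_of_support_subset (g := fun n => f n ^ 2) (s := s) j
      (fun n hn => by simp [hf n hn]) (fun n hn => by simp [hfj j hj n hn])
    have hexpand : ∑ n ∈ s, (f n - f (n + j)) ^ 2
        = ∑ n ∈ s, f n ^ 2 + ∑ n ∈ s, f (n + j) ^ 2 - 2 * ∑ n ∈ s, f n * f (n + j) := by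
      rw [mul_sum, ← sum_add_distrib, ← sum_sub_distrib]
      exact sum_congr rfl fun n _ => by ring
    rw [sum_sub_distrib, hexpand, hshift]
    ring
  rw [quadForm, lp.inner_eq_tsum, tsum_congr hpoint,
    tsum_eq_sum (s := s) fun n hn => by simp [hf n hn], ← Complex.ofReal_sum, Complex.ofReal_re,
    sum_comm]
  exact sum_congr rfl hcross

theorem sum_Icc_natAbs_le (h : ℕ → ℝ) (hh : ∀ k, 0 ≤ h k) (M : ℕ) :
    ∑ a ∈ Icc (-M : ℤ) M, h a.natAbs ≤ 2 * ∑ k ∈ range (M + 1), h k := by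
  rw [← sum_fiberwise_of_maps_to (t := range (M + 1)) (g := Int.natAbs)
    (fun a ha => by simp only [mem_Icc, mem_range] at ha ⊢; omega), mul_sum]
  refine sum_le_sum fun k _ => ?_
  have hfiber : {a ∈ Icc (-M : ℤ) M | a.natAbs = k} ⊆ {(k : ℤ), -(k : ℤ)} := by
    intro a ha
    simp only [mem_filter, mem_insert, mem_singleton] at ha ⊢
    omega
  calc ∑ a ∈ Icc (-M : ℤ) M with a.natAbs = k, h a.natAbs
      = #{a ∈ Icc (-M : ℤ) M | a.natAbs = k} • h k := by
        rw [← sum_const]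
        exact sum_congr rfl fun a ha => by rw [(mem_filter.1 ha).2]
    _ ≤ 2 * h k := by
        rw [nsmul_eq_mul]
        gcongr
        · exact hh k
        · exact_mod_cast (card_le_card hfiber).trans card_le_two

theorem sum_range_inv_sqrt_le (n : ℕ) : ∑ k ∈ range n, 1 / √((k : ℝ) + 1) ≤ 2 * √n := by
  induction n with
  | zero => simp
  | succ n ih =>
    have hs := sq_sqrt (Nat.cast_nonneg n : (0 : ℝ) ≤ n)
    have ht := sq_sqrt (by positivity : (0 : ℝ) ≤ n + 1)
    have ht0 : 0 < √((n : ℝ) + 1) := sqrt_pos.2 (by positivity)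
    -- after clearing the denominator this is `(√(n + 1) - √n) ^ 2 ≥ 0`
    have hstep : 1 / √((n : ℝ) + 1) ≤ 2 * √((n : ℝ) + 1) - 2 * √n := by
      rw [div_le_iff₀ ht0]
      nlinarith [sq_nonneg (√((n : ℝ) + 1) - √n)]
    rw [sum_range_succ]
    push_cast
    linarith

theorem sum_range_inv_add_one_le (n : ℕ) : ∑ k ∈ range n, 1 / ((k : ℝ) + 1) ≤ 1 + log n := by
  simpa [harmonic] using harmonic_le_one_add_log n

theorem sum_range_inv_sq_le (A n : ℕ) :
    ∑ k ∈ range n, 1 / ((A : ℝ) + k + 1) ^ 2 ≤ 2 / ((A : ℝ) + 1) := by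
  have h := sum_Ioo_inv_sq_le (α := ℝ) A (A + n + 1)
  rw [← Ico_add_one_left_eq_Ioo, sum_Ico_eq_sum_range, show A + n + 1 - (A + 1) = n by omega] at h
  refine le_of_eq_of_le (sum_congr rfl fun k _ => ?_) h
  push_cast
  ring

theorem one_div_add_add_one_le {a b : ℝ} (ha : 0 ≤ a) (hb : 0 ≤ b) :
    1 / (a + b + 1) ≤ 1 / √(a + 1) * (1 / √(b + 1)) := by
  rw [one_div_mul_one_div, ← sqrt_mul (by linarith)]
  apply one_div_le_one_div_of_le (sqrt_pos.2 (by positivity))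
  exact sqrt_le_iff.2 ⟨by positivity, by nlinarith⟩

def l1norm (n : ℤ × ℤ) : ℕ := n.1.natAbs + n.2.natAbs

def box (M : ℕ) : Finset (ℤ × ℤ) := Icc (-M : ℤ) M ×ˢ Icc (-M : ℤ) M

theorem mem_box {M : ℕ} {n : ℤ × ℤ} : n ∈ box M ↔ n.1.natAbs ≤ M ∧ n.2.natAbs ≤ M := by
  simp only [box, mem_product, mem_Icc]
  omega

theorem card_box (M : ℕ) : #(box M) = (2 * M + 1) ^ 2 := by
  rw [box, card_product, Int.card_Icc, sq]
  congr <;> omega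

theorem sum_box_inv_sq_l1norm_le (M : ℕ) :
    ∑ n ∈ box M, 1 / ((l1norm n : ℝ) + 1) ^ 2 ≤ 8 * (1 + log (M + 1)) := by
  calc ∑ n ∈ box M, 1 / ((l1norm n : ℝ) + 1) ^ 2
      = ∑ a ∈ Icc (-M : ℤ) M, ∑ b ∈ Icc (-M : ℤ) M,
          1 / ((a.natAbs : ℝ) + b.natAbs + 1) ^ 2 := by
        rw [box, sum_product]
        simp only [l1norm, Nat.cast_add]
    _ ≤ ∑ a ∈ Icc (-M : ℤ) M, 2 * ∑ k ∈ range (M + 1), 1 / ((a.natAbs : ℝ) + k + 1) ^ 2 :=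
        sum_le_sum fun a _ => sum_Icc_natAbs_le (fun k => 1 / ((a.natAbs : ℝ) + k + 1) ^ 2)
          (fun _ => by positivity) M
    _ ≤ ∑ a ∈ Icc (-M : ℤ) M, 4 * (1 / ((a.natAbs : ℝ) + 1)) :=
        sum_le_sum fun a _ => by
          have h := sum_range_inv_sq_le a.natAbs (M + 1)
          rw [div_eq_mul_one_div] at h
          linarith
    _ ≤ 2 * ∑ k ∈ range (M + 1), 4 * (1 / ((k : ℝ) + 1)) :=
        sum_Icc_natAbs_le (fun k => 4 * (1 / ((k : ℝ) + 1))) (fun _ => by positivity) M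
    _ ≤ 8 * (1 + log (M + 1)) := by
        rw [← mul_sum]
        have := sum_range_inv_add_one_le (M + 1)
        push_cast at this
        linarith

theorem sum_box_inv_l1norm_le (M : ℕ) :
    ∑ n ∈ box M, 1 / ((l1norm n : ℝ) + 1) ≤ 16 * (M + 1) := by
  have hsqrt : ∑ a ∈ Icc (-M : ℤ) M, 1 / √((a.natAbs : ℝ) + 1) ≤ 4 * √((M : ℝ) + 1) := by
    have := sum_range_inv_sqrt_le (M + 1)
    push_cast at this
    linarith [sum_Icc_natAbs_le (fun k => 1 / √((k : ℝ) + 1)) (fun _ => by positivity) M]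
  calc ∑ n ∈ box M, 1 / ((l1norm n : ℝ) + 1)
      ≤ ∑ n ∈ box M, 1 / √((n.1.natAbs : ℝ) + 1) * (1 / √((n.2.natAbs : ℝ) + 1)) :=
        sum_le_sum fun n _ => by
          simpa only [l1norm, Nat.cast_add] using one_div_add_add_one_le
            (Nat.cast_nonneg n.1.natAbs) (Nat.cast_nonneg n.2.natAbs)
    _ = (∑ a ∈ Icc (-M : ℤ) M, 1 / √((a.natAbs : ℝ) + 1)) ^ 2 := by
        rw [box, sum_product, sq, sum_mul_sum]
    _ ≤ (4 * √((M : ℝ) + 1)) ^ 2 := by gcongr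
    _ = 16 * (M + 1) := by rw [mul_pow, sq_sqrt (by positivity)]; norm_num

theorem abs_log_sub_log_le {x y : ℝ} (hx : 0 < x) (hy : 0 < y) :
    |log x - log y| ≤ |x - y| / min x y := by
  wlog hxy : x ≤ y generalizing x y
  · rw [abs_sub_comm, abs_sub_comm x, min_comm]
    exact this hy hx (le_of_not_ge hxy)
  rw [abs_sub_comm (log x), abs_of_nonneg (sub_nonneg.2 (log_le_log hx hxy)), abs_sub_comm x,
    abs_of_nonneg (sub_nonneg.2 hxy), min_eq_left hxy, ← log_div hy.ne' hx.ne']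
  calc log (y / x) ≤ y / x - 1 := log_le_sub_one_of_pos (by positivity)
    _ = (y - x) / x := by field_simp

theorem l1norm_add_le_of_mem_unitVectors {j : ℤ × ℤ} (hj : j ∈ unitVectors) (n : ℤ × ℤ) :
    l1norm (n + j) ≤ l1norm n + 1 ∧ l1norm n ≤ l1norm (n + j) + 1 := by
  simp only [unitVectors, mem_insert, mem_singleton] at hj
  rcases hj with rfl | rfl | rfl | rfl <;> simp only [l1norm, Prod.fst_add, Prod.snd_add] <;> omega

theorem lt_l1norm_of_not_mem_box {M : ℕ} {n : ℤ × ℤ} (hn : n ∉ box M) : M < l1norm n := by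
  rw [mem_box] at hn
  simp only [l1norm]
  omega

theorem log_natCast_add_one_pos {N : ℕ} (hN : 1 ≤ N) : 0 < log ((N : ℝ) + 1) :=
  log_pos (by norm_cast; omega)

theorem one_le_log_natCast_add_one {N : ℕ} (hN : 2 ≤ N) : 1 ≤ log ((N : ℝ) + 1) := by
  rw [le_log_iff_exp_le (by positivity)]
  have : (2 : ℝ) ≤ N := by exact_mod_cast hN
  linarith [exp_one_lt_d9]

def logProfile (N r : ℕ) : ℝ := max (1 - log ((r : ℝ) + 1) / log ((N : ℝ) + 1)) 0

section LogProfile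

variable {N : ℕ}

theorem logProfile_zero_right (N : ℕ) : logProfile N 0 = 1 := by
  simp [logProfile]

theorem logProfile_nonneg (r : ℕ) : 0 ≤ logProfile N r := le_max_right _ _

theorem logProfile_eq_zero (hN : 1 ≤ N) {r : ℕ} (hr : N ≤ r) : logProfile N r = 0 := by
  refine max_eq_right ?_
  rw [sub_nonpos, one_le_div (log_natCast_add_one_pos hN)]
  gcongr

theorem one_sub_log_div_log (hN : 1 ≤ N) (r : ℕ) :
    1 - log ((r : ℝ) + 1) / log ((N : ℝ) + 1) =
      log (((N : ℝ) + 1) / (r + 1)) / log ((N : ℝ) + 1) := by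
  rw [log_div (by positivity) (by positivity)]
  field_simp [(log_natCast_add_one_pos hN).ne']

theorem abs_logProfile_sub_le (hN : 1 ≤ N) {r r' : ℕ} (h₁ : r ≤ r' + 1) (h₂ : r' ≤ r + 1) :
    |logProfile N r - logProfile N r'| ≤ 2 / (((r : ℝ) + 1) * log ((N : ℝ) + 1)) := by
  have hΛ := log_natCast_add_one_pos hN
  have h₁' : (r : ℝ) ≤ r' + 1 := by exact_mod_cast h₁
  have h₂' : (r' : ℝ) ≤ r + 1 := by exact_mod_cast h₂
  have hmin : ((r : ℝ) + 1) / 2 ≤ min ((r' : ℝ) + 1) ((r : ℝ) + 1) :=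
    le_min (by linarith) (by linarith [(Nat.cast_nonneg r : (0 : ℝ) ≤ r)])
  have hdist : |((r' : ℝ) + 1) - ((r : ℝ) + 1)| ≤ 1 := abs_le.2 ⟨by linarith, by linarith⟩
  calc |logProfile N r - logProfile N r'|
      ≤ |log ((r' : ℝ) + 1) - log ((r : ℝ) + 1)| / log ((N : ℝ) + 1) := by
        refine (abs_max_sub_max_le_abs _ _ _).trans_eq ?_
        rw [← abs_of_pos hΛ, ← abs_div, abs_of_pos hΛ]
        ring_nf
    _ ≤ (1 / (((r : ℝ) + 1) / 2)) / log ((N : ℝ) + 1) := by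
        gcongr
        refine (abs_log_sub_log_le (by positivity) (by positivity)).trans ?_
        exact div_le_div₀ zero_le_one hdist (by positivity) hmin
    _ = 2 / (((r : ℝ) + 1) * log ((N : ℝ) + 1)) := by
        field_simp

theorem logProfile_sq_le (hN : 1 ≤ N) (r : ℕ) :
    logProfile N r ^ 2 ≤ 4 * ((N : ℝ) + 1) / (((r : ℝ) + 1) * log ((N : ℝ) + 1) ^ 2) := by
  have hΛ := log_natCast_add_one_pos hN
  set y := ((N : ℝ) + 1) / (r + 1) with hy
  have hlog : log y ≤ 2 * √y :=
    calc log y ≤ y ^ (1 / 2 : ℝ) / (1 / 2) := log_le_rpow_div (by positivity) (by norm_num)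
      _ = 2 * √y := by rw [← sqrt_eq_rpow]; ring
  have hle : logProfile N r ≤ 2 * √y / log ((N : ℝ) + 1) := by
    rw [logProfile, one_sub_log_div_log hN]
    exact max_le (by gcongr) (by positivity)
  calc logProfile N r ^ 2 ≤ (2 * √y / log ((N : ℝ) + 1)) ^ 2 := by
        gcongr
        exact logProfile_nonneg r
    _ = 4 * ((N : ℝ) + 1) / (((r : ℝ) + 1) * log ((N : ℝ) + 1) ^ 2) := by
        rw [div_pow, mul_pow, sq_sqrt (by positivity), hy]
        field_simp
        norm_num

theorem log_two_div_le_logProfile (hN : 1 ≤ N) {r : ℕ} (hr : 2 * (r + 1) ≤ N + 1) :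
    log 2 / log ((N : ℝ) + 1) ≤ logProfile N r := by
  refine le_max_of_le_left ?_
  rw [one_sub_log_div_log hN]
  refine div_le_div_of_nonneg_right (log_le_log two_pos ?_) (log_natCast_add_one_pos hN).le
  rw [le_div_iff₀ (by positivity)]
  exact_mod_cast hr

end LogProfile

section TestFunction

variable {N : ℕ}

theorem logProfile_l1norm_eq_zero (hN : 1 ≤ N) {n : ℤ × ℤ} (hn : n ∉ box N) :
    logProfile N (l1norm n) = 0 :=
  logProfile_eq_zero hN (lt_l1norm_of_not_mem_box hn).le

theorem logProfile_l1norm_add_eq_zero (hN : 1 ≤ N) {j : ℤ × ℤ} (hj : j ∈ unitVectors)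
    {n : ℤ × ℤ} (hn : n ∉ box N) : logProfile N (l1norm (n + j)) = 0 := by
  have := (l1norm_add_le_of_mem_unitVectors hj n).2
  exact logProfile_eq_zero hN (by linarith [lt_l1norm_of_not_mem_box hn])

def testFunction (N : ℕ) (hN : 1 ≤ N) : L2 (ℤ × ℤ) :=
  ⟨fun n => (logProfile N (l1norm n) : ℂ),
    (memℓp_zero ((box N).finite_toSet.subset fun n hn => by
      by_contra h
      simp [logProfile_l1norm_eq_zero hN h] at hn)).of_exponent_ge zero_le⟩

theorem testFunction_apply (hN : 1 ≤ N) (n : ℤ × ℤ) :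
    (testFunction N hN : ℤ × ℤ → ℂ) n = logProfile N (l1norm n) := rfl

theorem testFunction_apply_zero (hN : 1 ≤ N) : (testFunction N hN : ℤ × ℤ → ℂ) (0, 0) = 1 := by
  simp [testFunction_apply, l1norm, logProfile_zero_right]

theorem l1norm_lt_of_testFunction_ne_zero (hN : 1 ≤ N) {n : ℤ × ℤ}
    (hn : (testFunction N hN : ℤ × ℤ → ℂ) n ≠ 0) : l1norm n < N := by
  rw [testFunction_apply, Complex.ofReal_ne_zero] at hn
  by_contra h
  exact hn (logProfile_eq_zero hN (not_lt.1 h))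

theorem quadForm_testFunction (hN : 1 ≤ N) :
    quadForm (((4 : ℝ) : ℂ) • 1 - H0Z2) (testFunction N hN) =
      ∑ j ∈ unitVectors,
        (∑ n ∈ box N, (logProfile N (l1norm n) - logProfile N (l1norm (n + j))) ^ 2) / 2 :=
  quadForm_four_sub_H0Z2 _ _ (testFunction_apply hN) _
    (fun _ hn => logProfile_l1norm_eq_zero hN hn)
    (fun _ hj _ hn => logProfile_l1norm_add_eq_zero hN hj hn)

theorem quadForm_testFunction_nonneg (hN : 1 ≤ N) :
    0 ≤ quadForm (((4 : ℝ) : ℂ) • 1 - H0Z2) (testFunction N hN) := by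
  rw [quadForm_testFunction]
  positivity

theorem quadForm_testFunction_le (hN : 2 ≤ N) :
    quadForm (((4 : ℝ) : ℂ) • 1 - H0Z2) (testFunction N (by omega)) ≤ 128 / log ((N : ℝ) + 1) := by
  have hΛ1 := one_le_log_natCast_add_one hN
  have hgrad : ∀ j ∈ unitVectors, ∀ n, (logProfile N (l1norm n) - logProfile N (l1norm (n + j))) ^ 2
      ≤ 4 / log ((N : ℝ) + 1) ^ 2 * (1 / ((l1norm n : ℝ) + 1) ^ 2) := by
    intro j hj n
    obtain ⟨h₁, h₂⟩ := l1norm_add_le_of_mem_unitVectors hj n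
    calc _ = |logProfile N (l1norm n) - logProfile N (l1norm (n + j))| ^ 2 := (sq_abs _).symm
      _ ≤ (2 / (((l1norm n : ℝ) + 1) * log ((N : ℝ) + 1))) ^ 2 := by
          gcongr
          exact abs_logProfile_sub_le (by omega) h₂ h₁
      _ = _ := by field_simp; norm_num
  have hdir : ∀ j ∈ unitVectors,
      (∑ n ∈ box N, (logProfile N (l1norm n) - logProfile N (l1norm (n + j))) ^ 2) / 2
        ≤ 32 / log ((N : ℝ) + 1) := by
    intro j hj
    calc _ ≤ (4 / log ((N : ℝ) + 1) ^ 2 * ∑ n ∈ box N, 1 / ((l1norm n : ℝ) + 1) ^ 2) / 2 := by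
          rw [mul_sum]
          gcongr with n
          exact hgrad j hj n
      _ ≤ (4 / log ((N : ℝ) + 1) ^ 2 * (16 * log ((N : ℝ) + 1))) / 2 := by
          gcongr
          linarith [sum_box_inv_sq_l1norm_le N]
      _ = 32 / log ((N : ℝ) + 1) := by field_simp; ring
  calc _ ≤ ∑ j ∈ unitVectors, 32 / log ((N : ℝ) + 1) := by
        rw [quadForm_testFunction]
        exact sum_le_sum hdir
    _ = 128 / log ((N : ℝ) + 1) := by rw [sum_const, card_unitVectors]; ring

theorem norm_testFunction_sq (hN : 1 ≤ N) :
    ‖testFunction N hN‖ ^ 2 = ∑ n ∈ box N, logProfile N (l1norm n) ^ 2 := by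
  rw [norm_sq_eq_sum_of_support_subset _ (box N)
    fun n hn => by simp [testFunction_apply, logProfile_l1norm_eq_zero hN hn]]
  simp only [testFunction_apply, Complex.norm_real, norm_eq_abs, sq_abs]

theorem norm_testFunction_sq_le (hN : 2 ≤ N) :
    ‖testFunction N (by omega)‖ ^ 2 ≤ 144 * (N : ℝ) ^ 2 / log ((N : ℝ) + 1) ^ 2 := by
  have hN' : (2 : ℝ) ≤ N := by exact_mod_cast hN
  rw [norm_testFunction_sq]
  calc ∑ n ∈ box N, logProfile N (l1norm n) ^ 2
      ≤ ∑ n ∈ box N, 4 * ((N : ℝ) + 1) / log ((N : ℝ) + 1) ^ 2 * (1 / ((l1norm n : ℝ) + 1)) :=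
        sum_le_sum fun n _ => (logProfile_sq_le (by omega) _).trans_eq (by field_simp)
    _ ≤ 4 * ((N : ℝ) + 1) / log ((N : ℝ) + 1) ^ 2 * (16 * ((N : ℝ) + 1)) := by
        rw [← mul_sum]
        gcongr
        exact sum_box_inv_l1norm_le N
    _ ≤ 144 * (N : ℝ) ^ 2 / log ((N : ℝ) + 1) ^ 2 := by
        rw [div_mul_eq_mul_div]
        exact div_le_div_of_nonneg_right (by nlinarith) (by positivity)

theorem le_norm_testFunction_sq (hN : 2 ≤ N) :
    log 2 ^ 2 / 25 * (N : ℝ) ^ 2 / log ((N : ℝ) + 1) ^ 2 ≤ ‖testFunction N (by omega)‖ ^ 2 := by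
  have hΛ := log_natCast_add_one_pos (by omega : 1 ≤ N)
  -- `m` is chosen so that `2 (|n|₁ + 1) ≤ N + 1` on `box m`, while `N ≤ 5 (2 m + 1)`
  set m := (N - 1) / 4
  have hprofile : ∀ n ∈ box m, (log 2 / log ((N : ℝ) + 1)) ^ 2 ≤ logProfile N (l1norm n) ^ 2 := by
    intro n hn
    rw [mem_box] at hn
    gcongr
    exact log_two_div_le_logProfile (by omega) (by simp only [l1norm]; omega)
  have hm : (N : ℝ) ≤ 5 * (2 * m + 1) := by exact_mod_cast (by omega : N ≤ 5 * (2 * m + 1))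
  rw [norm_testFunction_sq]
  calc log 2 ^ 2 / 25 * (N : ℝ) ^ 2 / log ((N : ℝ) + 1) ^ 2
      ≤ ((2 * m + 1 : ℕ) : ℝ) ^ 2 * (log 2 / log ((N : ℝ) + 1)) ^ 2 := by
        rw [show log 2 ^ 2 / 25 * (N : ℝ) ^ 2 / log ((N : ℝ) + 1) ^ 2
          = ((N : ℝ) / 5) ^ 2 * (log 2 / log ((N : ℝ) + 1)) ^ 2 by ring]
        gcongr
        push_cast
        linarith
    _ = ∑ n ∈ box m, (log 2 / log ((N : ℝ) + 1)) ^ 2 := by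
        rw [sum_const, card_box, nsmul_eq_mul]
        push_cast
        ring
    _ ≤ ∑ n ∈ box m, logProfile N (l1norm n) ^ 2 := sum_le_sum hprofile
    _ ≤ ∑ n ∈ box N, logProfile N (l1norm n) ^ 2 :=
        sum_le_sum_of_subset_of_nonneg (fun n hn => by rw [mem_box] at hn ⊢; omega)
          fun _ _ _ => sq_nonneg _

end TestFunction

/-- Proposition 4.4: there are constants `0 < c₁ ≤ c₂ < ∞` such that for
every `L ≥ 2` there is `φ_L ∈ ℓ²(ℤ²)` supported in `{|n₁|+|n₂| ≤ L}` with `φ_L(0,0) = 1`,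
`0 ≤ ⟨φ_L, (4−H₀)φ_L⟩ ≤ c₂/log(L+1)` and `c₁ L²/log(L+1)² ≤ ‖φ_L‖² ≤ c₂ L²/log(L+1)²`. -/
theorem statement8 :
    ∃ c₁ c₂ : ℝ, 0 < c₁ ∧ c₁ ≤ c₂ ∧
      ∀ L : ℤ, 2 ≤ L →
        ∃ φ : L2 (ℤ × ℤ),
          (∀ n : ℤ × ℤ, (φ : ℤ × ℤ → ℂ) n ≠ 0 → |n.1| + |n.2| ≤ L) ∧
          (φ : ℤ × ℤ → ℂ) (0, 0) = 1 ∧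
          0 ≤ quadForm ((((4:ℝ)):ℂ) • 1 - H0Z2) φ ∧
          quadForm ((((4:ℝ)):ℂ) • 1 - H0Z2) φ ≤ c₂ / Real.log ((L:ℝ) + 1) ∧
          c₁ * (L:ℝ) ^ 2 / Real.log ((L:ℝ) + 1) ^ 2 ≤ ‖φ‖ ^ 2 ∧
          ‖φ‖ ^ 2 ≤ c₂ * (L:ℝ) ^ 2 / Real.log ((L:ℝ) + 1) ^ 2 := by
  refine ⟨log 2 ^ 2 / 25, 144, by positivity, by nlinarith [log_pos one_lt_two, log_two_lt_d9],
    fun L hL => ?_⟩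
  lift L to ℕ using (by omega)
  have hN : 2 ≤ L := by exact_mod_cast hL
  refine ⟨testFunction L (by omega), fun n hn => ?_, testFunction_apply_zero _,
    quadForm_testFunction_nonneg _, ?_, by exact_mod_cast le_norm_testFunction_sq hN,
    by exact_mod_cast norm_testFunction_sq_le hN⟩
  · have := l1norm_lt_of_testFunction_ne_zero _ hn
    simp only [l1norm] at this
    rw [Int.abs_eq_natAbs, Int.abs_eq_natAbs]
    omega
  · push_cast
    exact (quadForm_testFunction_le hN).trans
      (div_le_div_of_nonneg_right (by norm_num) (log_natCast_add_one_pos (by omega)).le)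

end DHKS
end
end
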